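/- arXiv:2101.06139 — 6 statements merged into one kernel-verified Lean document; each statement's English description precedes it below -/
import Mathlib

section
/- Let V be a nonempty finite set and let P be a V×V real matrix that is nonnegative (P(j,i) ≥ 0 for all j,i), column stochastic (Σ_{j∈V} P(j,i) = 1 for every i ∈ V), and primitive (there exists m ≥ 1 such that every entry of P^m is strictly positive). Let x₀ : V → ℝ and define x(k) = P^k x₀ and y(k) = P^k 𝟙, where 𝟙 is the all-ones vector. Then for every j ∈ V, the ratio x(k)_j / y(k)_j converges, as k → ∞, to (Σ_{ℓ∈V} x₀(ℓ)) / |V|. -/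
/-!
Write `x(k) = P ^ k *ᵥ x₀`, `y(k) = P ^ k *ᵥ 1` and `r(k) = x(k) / y(k)`. Then `r(t + k) j` is
the mean of `r(k)` with weights `(P ^ t) j i * y(k) i`, and since column-stochastic matrices
preserve sums, the target `(∑ x₀) / |V|` is the mean of `r(k)` with weights `y(k)`. So every
`r(k) j` and the target lie between the minimum and maximum of `r(k)`, and it suffices that the
spread `max r(k) - min r(k)` tends to `0`. It never increases, and if `δ > 0` is the least entry
of `P ^ m`, then for `k ≥ m` we have `y(k) ≥ δ |V|` and `y ≤ |V|`, so every weight of the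
`m`-step mean is at least `δ²` times their total; this shrinks the spread by the factor
`1 - 2 δ²`.
-/

open Filter Matrix Finset Topology

noncomputable def spread {ι : Type*} (v : ι → ℝ) : ℝ := (⨆ i, v i) - ⨅ i, v i

section WeightedAverage

variable {ι : Type*} [Fintype ι] {w v : ι → ℝ} {c : ℝ}

theorem spread_nonneg [Nonempty ι] (v : ι → ℝ) : 0 ≤ spread v :=
  sub_nonneg.2 <| (ciInf_le (Finite.bddBelow_range v) (Classical.arbitrary ι)).trans
    (le_ciSup (Finite.bddAbove_range v) _)

theorem abs_sub_le_spread {a : ℝ} (ha : a ∈ Set.Icc (⨅ i, v i) (⨆ i, v i)) (j : ι) :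
    |v j - a| ≤ spread v :=
  abs_sub_le_of_le_of_le (ciInf_le (Finite.bddBelow_range v) j)
    (le_ciSup (Finite.bddAbove_range v) j) ha.1 ha.2

theorem sum_mul_div_sum_le_iSup_sub [Nonempty ι] (hw : ∀ i, 0 ≤ w i) (hpos : 0 < ∑ i, w i)
    (hc : ∀ i, c * ∑ j, w j ≤ w i) :
    (∑ i, w i * v i) / ∑ i, w i ≤ (⨆ i, v i) - c * spread v := by
  obtain ⟨i₀, hi₀⟩ := exists_eq_ciInf_of_finite (f := v)
  set M := ⨆ i, v i
  have hM : ∀ i, 0 ≤ M - v i := fun i => sub_nonneg.2 (le_ciSup (Finite.bddAbove_range v) i)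
  have hsingle : w i₀ * (M - v i₀) ≤ ∑ i, w i * (M - v i) :=
    single_le_sum (f := fun i => w i * (M - v i)) (fun i _ => mul_nonneg (hw i) (hM i))
      (mem_univ i₀)
  have hexpand : ∑ i, w i * (M - v i) = (∑ i, w i) * M - ∑ i, w i * v i := by
    simp only [mul_sub, sum_sub_distrib, sum_mul]
  rw [div_le_iff₀ hpos, spread, ← hi₀]
  nlinarith [mul_le_mul_of_nonneg_right (hc i₀) (hM i₀)]

theorem iInf_add_le_sum_mul_div_sum [Nonempty ι] (hw : ∀ i, 0 ≤ w i) (hpos : 0 < ∑ i, w i)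
    (hc : ∀ i, c * ∑ j, w j ≤ w i) :
    (⨅ i, v i) + c * spread v ≤ (∑ i, w i * v i) / ∑ i, w i := by
  obtain ⟨i₀, hi₀⟩ := exists_eq_ciSup_of_finite (f := v)
  set m := ⨅ i, v i
  have hm : ∀ i, 0 ≤ v i - m := fun i => sub_nonneg.2 (ciInf_le (Finite.bddBelow_range v) i)
  have hsingle : w i₀ * (v i₀ - m) ≤ ∑ i, w i * (v i - m) :=
    single_le_sum (f := fun i => w i * (v i - m)) (fun i _ => mul_nonneg (hw i) (hm i))
      (mem_univ i₀)
  have hexpand : ∑ i, w i * (v i - m) = ∑ i, w i * v i - (∑ i, w i) * m := by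
    simp only [mul_sub, sum_sub_distrib, sum_mul]
  rw [le_div_iff₀ hpos, spread, ← hi₀]
  nlinarith [mul_le_mul_of_nonneg_right (hc i₀) (hm i₀)]

theorem sum_mul_div_sum_mem_Icc [Nonempty ι] (hw : ∀ i, 0 ≤ w i) (hpos : 0 < ∑ i, w i) :
    (∑ i, w i * v i) / ∑ i, w i ∈ Set.Icc (⨅ i, v i) (⨆ i, v i) := by
  have hc : ∀ i, 0 * ∑ j, w j ≤ w i := by simpa using hw
  constructor
  · simpa using iInf_add_le_sum_mul_div_sum (v := v) hw hpos hc
  · simpa using sum_mul_div_sum_le_iSup_sub (v := v) hw hpos hc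

end WeightedAverage

theorem tendsto_zero_of_antitone_of_le_mul {d : ℕ → ℝ} {q : ℝ} {m : ℕ} (hd : Antitone d)
    (hd₀ : ∀ k, 0 ≤ d k) (hq : q < 1) (hdq : ∀ᶠ k in atTop, d (m + k) ≤ q * d k) :
    Tendsto d atTop (𝓝 0) := by
  have hlim := tendsto_atTop_ciInf hd ⟨0, Set.forall_mem_range.2 hd₀⟩
  have hle : ⨅ k, d k ≤ q * ⨅ k, d k :=
    le_of_tendsto_of_tendsto ((tendsto_add_atTop_iff_nat m).2 hlim |>.congr fun k => by
      rw [add_comm]) (hlim.const_mul q) hdq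
  have hnonneg : 0 ≤ ⨅ k, d k := le_ciInf hd₀
  rwa [show ⨅ k, d k = 0 by nlinarith] at hlim

section Ratio

variable {ι κ : Type*} [Fintype ι]

theorem mulVec_div_mulVec_apply (A : Matrix κ ι ℝ) {x y : ι → ℝ} (hy : ∀ i, y i ≠ 0) (j : κ) :
    ((A *ᵥ x) / (A *ᵥ y)) j = (∑ i, A j i * y i * (x / y) i) / ∑ i, A j i * y i := by
  simp only [Pi.div_apply, mulVec, dotProduct, mul_assoc, mul_div_cancel₀ _ (hy _)]

theorem mulVec_pos {A : Matrix κ ι ℝ} {v : ι → ℝ}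
    (hA : ∀ j i, 0 ≤ A j i) (hrow : ∀ j, ∃ i, 0 < A j i) (hv : ∀ i, 0 < v i) (j : κ) :
    0 < (A *ᵥ v) j :=
  let ⟨i, hi⟩ := hrow j
  sum_pos' (fun i _ => mul_nonneg (hA j i) (hv i).le) ⟨i, mem_univ i, mul_pos hi (hv i)⟩

theorem spread_mulVec_div_mulVec_le [Nonempty ι] [Nonempty κ] {A : Matrix κ ι ℝ} {x y : ι → ℝ}
    {c : ℝ} (hA : ∀ j i, 0 ≤ A j i) (hy : ∀ i, 0 < y i) (hAy : ∀ j, 0 < (A *ᵥ y) j)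
    (hc : ∀ j i, c * (A *ᵥ y) j ≤ A j i * y i) :
    spread ((A *ᵥ x) / (A *ᵥ y)) ≤ (1 - 2 * c) * spread (x / y) := by
  have hw : ∀ j i, 0 ≤ A j i * y i := fun j i => mul_nonneg (hA j i) (hy i).le
  have hsup : (⨆ j, ((A *ᵥ x) / (A *ᵥ y)) j) ≤ (⨆ i, (x / y) i) - c * spread (x / y) :=
    ciSup_le fun j => by
      rw [mulVec_div_mulVec_apply A (fun i => (hy i).ne')]
      exact sum_mul_div_sum_le_iSup_sub (hw j) (hAy j) (hc j)
  have hinf : (⨅ i, (x / y) i) + c * spread (x / y) ≤ ⨅ j, ((A *ᵥ x) / (A *ᵥ y)) j :=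
    le_ciInf fun j => by
      rw [mulVec_div_mulVec_apply A (fun i => (hy i).ne')]
      exact iInf_add_le_sum_mul_div_sum (hw j) (hAy j) (hc j)
  unfold spread at *
  linarith

end Ratio

section ColStochastic

variable {V : Type*} [Fintype V] [DecidableEq V] {P : Matrix V V ℝ}

noncomputable def consensusRatio (P : Matrix V V ℝ) (x : V → ℝ) (k : ℕ) : V → ℝ :=
  (P ^ k *ᵥ x) / (P ^ k *ᵥ 1)

theorem consensusRatio_add (P : Matrix V V ℝ) (x : V → ℝ) (t k : ℕ) :
    consensusRatio P x (t + k) = (P ^ t *ᵥ (P ^ k *ᵥ x)) / (P ^ t *ᵥ (P ^ k *ᵥ 1)) := by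
  simp only [consensusRatio, pow_add, mulVec_mulVec]

theorem exists_pos_of_pow_pos [Nonempty V] (hP : ∀ j i, 0 ≤ P j i) {m : ℕ} (hm : 1 ≤ m)
    (hpos : ∀ j i, 0 < (P ^ m) j i) (j : V) : ∃ i, 0 < P j i := by
  obtain ⟨n, rfl⟩ := Nat.exists_eq_add_of_le' hm
  by_contra! hrow
  have hj := hpos j (Classical.arbitrary V)
  simp [pow_succ', mul_apply, fun i => le_antisymm (hrow i) (hP j i)] at hj

theorem pow_mulVec_one_pos (hP : P ∈ colStochastic ℝ V) (hrow : ∀ j, ∃ i, 0 < P j i) (k : ℕ) :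
    ∀ j, 0 < (P ^ k *ᵥ 1) j := by
  induction k with
  | zero => simp
  | succ k ih =>
    rw [pow_succ', ← mulVec_mulVec]
    exact mulVec_pos (fun _ _ => nonneg_of_mem_colStochastic hP) hrow ih

theorem sum_pow_mulVec_one (hP : P ∈ colStochastic ℝ V) (k : ℕ) :
    ∑ i, (P ^ k *ᵥ 1) i = Fintype.card V := by
  simp [sum_mulVec_of_mem_colStochastic (pow_mem hP k)]

theorem pow_mulVec_one_le_card (hP : P ∈ colStochastic ℝ V) (k : ℕ) (j : V) :
    (P ^ k *ᵥ 1) j ≤ Fintype.card V := by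
  rw [← sum_pow_mulVec_one hP k]
  exact single_le_sum (fun i _ => nonneg_mulVec_of_mem_colStochastic (pow_mem hP k)
    (fun _ => zero_le_one) i) (mem_univ j)

theorem mul_card_le_pow_add_mulVec_one (hP : P ∈ colStochastic ℝ V) {m : ℕ} {δ : ℝ}
    (hδ : ∀ j i, δ ≤ (P ^ m) j i) (k : ℕ) (j : V) :
    δ * Fintype.card V ≤ (P ^ (m + k) *ᵥ 1) j := by
  rw [pow_add, ← mulVec_mulVec, ← sum_pow_mulVec_one hP k, mul_sum]
  exact sum_le_sum fun i _ => mul_le_mul_of_nonneg_right (hδ j i)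
    (nonneg_mulVec_of_mem_colStochastic (pow_mem hP k) (fun _ => zero_le_one) i)

variable [Nonempty V]

theorem spread_consensusRatio_add_le (hP : P ∈ colStochastic ℝ V)
    (hy : ∀ k j, 0 < (P ^ k *ᵥ 1) j) {x : V → ℝ} {t k : ℕ} {c : ℝ}
    (hc : ∀ j i, c * (P ^ (t + k) *ᵥ 1) j ≤ (P ^ t) j i * (P ^ k *ᵥ 1) i) :
    spread (consensusRatio P x (t + k)) ≤ (1 - 2 * c) * spread (consensusRatio P x k) := by
  have hcomp : ∀ j, (P ^ (t + k) *ᵥ 1) j = (P ^ t *ᵥ (P ^ k *ᵥ 1)) j := by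
    simp [pow_add, mulVec_mulVec]
  rw [consensusRatio_add]
  exact spread_mulVec_div_mulVec_le (fun _ _ => nonneg_of_mem_colStochastic (pow_mem hP t))
    (hy k) (fun j => hcomp j ▸ hy (t + k) j) (fun j i => hcomp j ▸ hc j i)

theorem antitone_spread_consensusRatio (hP : P ∈ colStochastic ℝ V)
    (hy : ∀ k j, 0 < (P ^ k *ᵥ 1) j) (x : V → ℝ) :
    Antitone fun k => spread (consensusRatio P x k) :=
  antitone_nat_of_succ_le fun k => by
    simpa [add_comm 1 k] using spread_consensusRatio_add_le (x := x) (t := 1) (k := k) (c := 0) hP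
      hy fun j i => by simpa using mul_nonneg (nonneg_of_mem_colStochastic hP) (hy k i).le

theorem tendsto_spread_consensusRatio (hP : P ∈ colStochastic ℝ V)
    (hy : ∀ k j, 0 < (P ^ k *ᵥ 1) j) {m : ℕ} (hpos : ∀ j i, 0 < (P ^ m) j i) (x : V → ℝ) :
    Tendsto (fun k => spread (consensusRatio P x k)) atTop (𝓝 0) := by
  obtain ⟨⟨j₀, i₀⟩, hmin⟩ := Finite.exists_min fun p : V × V => (P ^ m) p.1 p.2
  set δ := (P ^ m) j₀ i₀
  have hδ : ∀ j i, δ ≤ (P ^ m) j i := fun j i => hmin (j, i)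
  have hδpos : 0 < δ := hpos j₀ i₀
  refine tendsto_zero_of_antitone_of_le_mul (antitone_spread_consensusRatio hP hy x)
    (fun _ => spread_nonneg _) (q := 1 - 2 * δ ^ 2) (m := m) (by nlinarith) ?_
  filter_upwards [eventually_ge_atTop m] with k hk
  obtain ⟨k, rfl⟩ := exists_add_of_le hk
  refine spread_consensusRatio_add_le hP hy fun j i => ?_
  calc δ ^ 2 * (P ^ (m + (m + k)) *ᵥ 1) j ≤ δ * (δ * Fintype.card V) := by
        rw [sq, mul_assoc]
        exact mul_le_mul_of_nonneg_left
          (mul_le_mul_of_nonneg_left (pow_mulVec_one_le_card hP _ j) hδpos.le) hδpos.le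
    _ ≤ (P ^ m) j i * (P ^ (m + k) *ᵥ 1) i :=
        mul_le_mul (hδ j i) (mul_card_le_pow_add_mulVec_one hP hδ k i) (by positivity)
          (nonneg_of_mem_colStochastic (pow_mem hP m))

theorem abs_consensusRatio_sub_average_le (hP : P ∈ colStochastic ℝ V)
    (hy : ∀ k j, 0 < (P ^ k *ᵥ 1) j) (x : V → ℝ) (k : ℕ) (j : V) :
    |consensusRatio P x k j - (∑ ℓ, x ℓ) / Fintype.card V| ≤ spread (consensusRatio P x k) := by
  have havg : (∑ ℓ, x ℓ) / Fintype.card V =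
      (∑ i, (P ^ k *ᵥ 1) i * consensusRatio P x k i) / ∑ i, (P ^ k *ᵥ 1) i := by
    rw [sum_pow_mulVec_one hP k, ← sum_mulVec_of_mem_colStochastic (pow_mem hP k)]
    simp only [consensusRatio, Pi.div_apply, mul_div_cancel₀ _ (hy k _).ne']
  rw [havg]
  exact abs_sub_le_spread (sum_mul_div_sum_mem_Icc (fun i => (hy k i).le)
    (sum_pos (fun i _ => hy k i) univ_nonempty)) j

end ColStochastic

/-- Ratio consensus (Lemma 1): for a primitive column-stochastic matrix `P`,
the entrywise ratio of the iterations `x(k) = P^k x₀` and `y(k) = P^k 𝟙`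
converges at every node to the average `(∑ ℓ, x₀ ℓ) / |V|`. -/
theorem ratio_consensus_average
    {V : Type*} [Fintype V] [DecidableEq V] [Nonempty V]
    (P : Matrix V V ℝ)
    (hnonneg : ∀ j i, 0 ≤ P j i)
    (hcol : ∀ i, ∑ j, P j i = 1)
    (hprim : ∃ m : ℕ, 1 ≤ m ∧ ∀ j i, 0 < (P ^ m) j i)
    (x₀ : V → ℝ) :
    ∀ j : V,
      Tendsto (fun k : ℕ => ((P ^ k) *ᵥ x₀) j / ((P ^ k) *ᵥ (fun _ => (1 : ℝ))) j)
        atTop (nhds ((∑ ℓ, x₀ ℓ) / (Fintype.card V : ℝ))) := by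
  intro j
  obtain ⟨m, hm, hpos⟩ := hprim
  have hP : P ∈ colStochastic ℝ V := mem_colStochastic_iff_sum.2 ⟨hnonneg, hcol⟩
  have hy := pow_mulVec_one_pos hP (exists_pos_of_pow_pos hnonneg hm hpos)
  exact tendsto_iff_norm_sub_tendsto_zero.2 <| squeeze_zero (fun _ => norm_nonneg _)
    (fun k => abs_consensusRatio_sub_average_le hP hy x₀ k j)
    (tendsto_spread_consensusRatio hP hy hpos x₀)
end

section
/- Let V be a nonempty finite set and let P be a V×V real matrix that is nonnegative, column stochastic (Σ_{j∈V} P(j,i) = 1 for every i), and primitive (there exists m ≥ 1 such that every entry of P^m is strictly positive). Let y₀ : V → ℝ and z₀ : V → ℝ with z₀(i) > 0 for every i. Then for every j ∈ V, the ratio (P^k y₀)_j / (P^k z₀)_j converges, as k → ∞, to (Σ_{ℓ∈V} y₀(ℓ)) / (Σ_{ℓ∈V} z₀(ℓ)). In particular, with y₀(j) = ℓ_j + u_j (local workload plus occupied utilization) and z₀(j) = π_j^max (local capacity), every node's ratio converges to (ρ + u_tot)/π^max, where ρ = Σ_j ℓ_j, u_tot = Σ_j u_j and π^max = Σ_j π_j^max.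 -/
/-!
Let `ε > 0` bound the entries of `P ^ m` from below. On vectors summing to zero, `P ^ m` acts
like `P ^ m - ε J` (`J` the all-ones matrix), a nonnegative matrix with column sums
`1 - |V| ε < 1`, so it contracts the ℓ¹ norm by that factor, while `P` itself never increases it.
Writing `y₀ = w + ρ z₀` with `ρ = ∑ y₀ / ∑ z₀`, the vector `w` sums to zero, hence `P ^ k w → 0`;
meanwhile `(P ^ k z₀) j ≥ ε ∑ z₀` for `k ≥ m`, so `(P ^ k y₀) j / (P ^ k z₀) j → ρ`.
-/

open Filter Matrix Topology

namespace Matrix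

section Algebra

variable {R : Type*} [CommRing R] [LinearOrder R] [IsStrictOrderedRing R]
  {l n : Type*} [Fintype n]

theorem sum_abs_mulVec_le [Fintype l] {Q : Matrix l n R} (hQ : ∀ i j, 0 ≤ Q i j) {t : R}
    (hcol : ∀ i, ∑ j, Q j i = t) (v : n → R) :
    ∑ j, |(Q *ᵥ v) j| ≤ t * ∑ i, |v i| :=
  calc ∑ j, |(Q *ᵥ v) j| ≤ ∑ j, ∑ i, Q j i * |v i| := by
        gcongr with j
        refine (Finset.abs_sum_le_sum_abs _ _).trans_eq ?_
        simp only [abs_mul, abs_of_nonneg (hQ _ _)]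
    _ = t * ∑ i, |v i| := by
        rw [Finset.sum_comm, Finset.mul_sum]
        simp only [← Finset.sum_mul, hcol]

theorem mul_sum_le_mulVec {A : Matrix l n R} {ε : R} (hε : ∀ i j, ε ≤ A i j) {z : n → R}
    (hz : ∀ i, 0 ≤ z i) (j : l) : ε * ∑ i, z i ≤ (A *ᵥ z) j := by
  rw [Finset.mul_sum]
  exact Finset.sum_le_sum fun i _ => mul_le_mul_of_nonneg_right (hε j i) (hz i)

variable [DecidableEq n] {M : Matrix n n R}

theorem sum_abs_mulVec_le_of_mem_colStochastic (hM : M ∈ colStochastic R n) (v : n → R) :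
    ∑ j, |(M *ᵥ v) j| ≤ ∑ i, |v i| := by
  simpa using sum_abs_mulVec_le (fun i j => hM.1 i j) (sum_col_of_mem_colStochastic hM) v

theorem card_mul_le_one_of_le_entries [Nonempty n] (hM : M ∈ colStochastic R n) {ε : R}
    (hε : ∀ i j, ε ≤ M i j) : (Fintype.card n : R) * ε ≤ 1 := by
  obtain ⟨i⟩ := ‹Nonempty n›
  calc (Fintype.card n : R) * ε = ∑ _j : n, ε := by simp
    _ ≤ ∑ j, M j i := Finset.sum_le_sum fun j _ => hε j i
    _ = 1 := sum_col_of_mem_colStochastic hM i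

theorem sum_abs_mulVec_le_of_le_entries (hM : M ∈ colStochastic R n) {ε : R}
    (hε : ∀ i j, ε ≤ M i j) {v : n → R} (hv : ∑ i, v i = 0) :
    ∑ j, |(M *ᵥ v) j| ≤ (1 - Fintype.card n * ε) * ∑ i, |v i| := by
  have hshift : M *ᵥ v = (M - of fun _ _ => ε) *ᵥ v := by
    ext j
    simp only [mulVec, dotProduct, sub_apply, of_apply, sub_mul, Finset.sum_sub_distrib,
      ← Finset.mul_sum, hv, mul_zero, sub_zero]
  rw [hshift]
  refine sum_abs_mulVec_le (fun i j => sub_nonneg.2 (hε i j)) (fun i => ?_) v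
  simp [Finset.sum_sub_distrib, sum_col_of_mem_colStochastic hM]

theorem sum_abs_pow_mulVec_le [Nonempty n] (hM : M ∈ colStochastic R n) {m : ℕ} {ε : R}
    (hε : ∀ i j, ε ≤ (M ^ m) i j) {v : n → R} (hv : ∑ i, v i = 0) (k : ℕ) :
    ∑ j, |(M ^ k *ᵥ v) j| ≤ (1 - Fintype.card n * ε) ^ (k / m) * ∑ i, |v i| := by
  have hMm : M ^ m ∈ colStochastic R n := pow_mem hM m
  have hc : 0 ≤ 1 - Fintype.card n * ε := sub_nonneg.2 (card_mul_le_one_of_le_entries hMm hε)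
  have hblocks : ∀ q : ℕ, ∑ j, |((M ^ m) ^ q *ᵥ v) j|
      ≤ (1 - Fintype.card n * ε) ^ q * ∑ i, |v i| := by
    intro q
    induction q with
    | zero => simp
    | succ q ih =>
      have hsum : ∑ i, ((M ^ m) ^ q *ᵥ v) i = 0 := by
        rw [sum_mulVec_of_mem_colStochastic (pow_mem hMm q), hv]
      rw [pow_succ', ← mulVec_mulVec]
      calc _ ≤ (1 - Fintype.card n * ε) * ∑ i, |((M ^ m) ^ q *ᵥ v) i| :=
            sum_abs_mulVec_le_of_le_entries hMm hε hsum
        _ ≤ (1 - Fintype.card n * ε) * ((1 - Fintype.card n * ε) ^ q * ∑ i, |v i|) := by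
            gcongr
        _ = _ := by ring
  calc ∑ j, |(M ^ k *ᵥ v) j| = ∑ j, |(M ^ (k % m) *ᵥ ((M ^ m) ^ (k / m) *ᵥ v)) j| := by
        rw [mulVec_mulVec, ← pow_mul, ← pow_add, Nat.mod_add_div]
    _ ≤ ∑ j, |((M ^ m) ^ (k / m) *ᵥ v) j| :=
        sum_abs_mulVec_le_of_mem_colStochastic (pow_mem hM _) _
    _ ≤ _ := hblocks _

theorem mul_sum_le_pow_mulVec (hM : M ∈ colStochastic R n) {m : ℕ} {ε : R}
    (hε : ∀ i j, ε ≤ (M ^ m) i j) {z : n → R} (hz : ∀ i, 0 ≤ z i) {k : ℕ} (hk : m ≤ k)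
    (j : n) : ε * ∑ i, z i ≤ (M ^ k *ᵥ z) j := by
  obtain ⟨r, rfl⟩ := Nat.exists_eq_add_of_le hk
  rw [pow_add, ← mulVec_mulVec, ← sum_mulVec_of_mem_colStochastic (x := z) (pow_mem hM r)]
  exact mul_sum_le_mulVec hε (nonneg_mulVec_of_mem_colStochastic (pow_mem hM r) hz) j

end Algebra

theorem exists_pos_le_entries {R : Type*} [LinearOrder R] [Zero R] {l n : Type*} [Finite l]
    [Finite n] [Nonempty l] [Nonempty n] {A : Matrix l n R} (h : ∀ i j, 0 < A i j) :
    ∃ ε > 0, ∀ i j, ε ≤ A i j := by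
  obtain ⟨⟨i₀, j₀⟩, hmin⟩ := Finite.exists_min fun p : l × n => A p.1 p.2
  exact ⟨A i₀ j₀, h i₀ j₀, fun i j => hmin (i, j)⟩

variable {n : Type*} [Fintype n] [DecidableEq n] {M : Matrix n n ℝ}

theorem tendsto_sum_abs_pow_mulVec_zero [Nonempty n] (hM : M ∈ colStochastic ℝ n) {m : ℕ}
    (hm : m ≠ 0) {ε : ℝ} (hε0 : 0 < ε) (hε : ∀ i j, ε ≤ (M ^ m) i j) {v : n → ℝ}
    (hv : ∑ i, v i = 0) : Tendsto (fun k => ∑ j, |(M ^ k *ᵥ v) j|) atTop (𝓝 0) := by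
  have hc0 : 0 ≤ 1 - Fintype.card n * ε :=
    sub_nonneg.2 (card_mul_le_one_of_le_entries (pow_mem hM m) hε)
  have hc1 : 1 - Fintype.card n * ε < 1 := by
    have : (0 : ℝ) < Fintype.card n := by exact_mod_cast Fintype.card_pos
    nlinarith
  have hgeom : Tendsto (fun k => (1 - Fintype.card n * ε) ^ (k / m) * ∑ i, |v i|) atTop (𝓝 0) := by
    simpa using ((tendsto_pow_atTop_nhds_zero_of_lt_one hc0 hc1).comp
      (Nat.tendsto_div_const_atTop hm)).mul_const (∑ i, |v i|)
  exact squeeze_zero (fun k => Finset.sum_nonneg fun j _ => abs_nonneg _)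
    (sum_abs_pow_mulVec_le hM hε hv) hgeom

theorem tendsto_pow_mulVec_div_of_sum_eq_zero (hM : M ∈ colStochastic ℝ n) {m : ℕ} (hm : m ≠ 0)
    {ε : ℝ} (hε0 : 0 < ε) (hε : ∀ i j, ε ≤ (M ^ m) i j) {w z : n → ℝ} (hw : ∑ i, w i = 0)
    (hz : ∀ i, 0 < z i) (j : n) :
    Tendsto (fun k => (M ^ k *ᵥ w) j / (M ^ k *ᵥ z) j) atTop (𝓝 0) := by
  have : Nonempty n := ⟨j⟩
  have hδ : 0 < ε * ∑ i, z i := mul_pos hε0 (Finset.sum_pos (fun i _ => hz i) Finset.univ_nonempty)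
  refine squeeze_zero_norm' ?_ (by
    simpa using (tendsto_sum_abs_pow_mulVec_zero hM hm hε0 hε hw).div_const (ε * ∑ i, z i))
  filter_upwards [eventually_ge_atTop m] with k hk
  have hd := mul_sum_le_pow_mulVec hM hε (fun i => (hz i).le) hk j
  rw [norm_div, Real.norm_eq_abs, Real.norm_eq_abs, abs_of_pos (hδ.trans_le hd)]
  exact div_le_div₀ (Finset.sum_nonneg fun i _ => abs_nonneg _)
    (Finset.single_le_sum (f := fun i => |(M ^ k *ᵥ w) i|) (fun i _ => abs_nonneg _)
      (Finset.mem_univ j)) hδ hd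

theorem tendsto_pow_mulVec_div_pow_mulVec (hM : M ∈ colStochastic ℝ n) {m : ℕ} (hm : m ≠ 0)
    (hpos : ∀ i j, 0 < (M ^ m) i j) (y z : n → ℝ) (hz : ∀ i, 0 < z i) (j : n) :
    Tendsto (fun k => (M ^ k *ᵥ y) j / (M ^ k *ᵥ z) j) atTop
      (𝓝 ((∑ i, y i) / ∑ i, z i)) := by
  have : Nonempty n := ⟨j⟩
  obtain ⟨ε, hε0, hε⟩ := exists_pos_le_entries hpos
  have hZ : 0 < ∑ i, z i := Finset.sum_pos (fun i _ => hz i) Finset.univ_nonempty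
  set ρ := (∑ i, y i) / ∑ i, z i
  have hw : ∑ i, (y - ρ • z) i = 0 := by
    simp [Finset.sum_sub_distrib, ← Finset.mul_sum, ρ, div_mul_cancel₀ _ hZ.ne']
  have hlim := (tendsto_const_nhds (x := ρ)).add
    (tendsto_pow_mulVec_div_of_sum_eq_zero hM hm hε0 hε hw hz j)
  rw [add_zero] at hlim
  refine hlim.congr' ?_
  filter_upwards [eventually_ge_atTop m] with k hk
  have hd : (M ^ k *ᵥ z) j ≠ 0 :=
    ((mul_pos hε0 hZ).trans_le (mul_sum_le_pow_mulVec hM hε (fun i => (hz i).le) hk j)).ne'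
  rw [mulVec_sub, mulVec_smul, Pi.sub_apply, Pi.smul_apply, smul_eq_mul, sub_div,
    mul_div_assoc, div_self hd]
  ring

end Matrix

theorem ratio_consensus_general_general
    {V : Type*} [Fintype V] [DecidableEq V]
    (P : Matrix V V ℝ)
    (hnonneg : ∀ j i, 0 ≤ P j i)
    (hcol : ∀ i, ∑ j, P j i = 1)
    (hprim : ∃ m : ℕ, 1 ≤ m ∧ ∀ j i, 0 < (P ^ m) j i)
    (y₀ z₀ : V → ℝ) (hz₀ : ∀ i, 0 < z₀ i) :
    (∀ j : V,
      Tendsto (fun k : ℕ => ((P ^ k) *ᵥ y₀) j / ((P ^ k) *ᵥ z₀) j)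
        atTop (nhds ((∑ ℓ, y₀ ℓ) / (∑ ℓ, z₀ ℓ)))) ∧
    (∀ (ℓ u πmax : V → ℝ), (∀ j, 0 < πmax j) →
      y₀ = (fun j => ℓ j + u j) → z₀ = πmax →
      ∀ j : V,
        Tendsto (fun k : ℕ => ((P ^ k) *ᵥ y₀) j / ((P ^ k) *ᵥ z₀) j)
          atTop (nhds (((∑ i, ℓ i) + (∑ i, u i)) / (∑ i, πmax i)))) := by
  have hP : P ∈ colStochastic ℝ V := mem_colStochastic_iff_sum.2 ⟨hnonneg, hcol⟩
  obtain ⟨m, hm, hpos⟩ := hprim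
  have hratio := tendsto_pow_mulVec_div_pow_mulVec hP (by omega) hpos y₀ z₀ hz₀
  refine ⟨hratio, fun ℓ u πmax _ hy hz j => ?_⟩
  subst hy hz
  simpa only [Finset.sum_add_distrib] using hratio j

/-- Ratio consensus with general positive denominator initialization:
for a primitive column-stochastic matrix `P` and `z₀ > 0` entrywise,
`(P^k y₀)_j / (P^k z₀)_j → (∑ y₀) / (∑ z₀)` for every node `j`.
In particular, with `y₀ j = ℓ j + u j` and `z₀ j = π_j^max`, every node's
ratio converges to `(ρ + u_tot)/π^max`. -/
theorem ratio_consensus_general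
    {V : Type*} [Fintype V] [DecidableEq V] [Nonempty V]
    (P : Matrix V V ℝ)
    (hnonneg : ∀ j i, 0 ≤ P j i)
    (hcol : ∀ i, ∑ j, P j i = 1)
    (hprim : ∃ m : ℕ, 1 ≤ m ∧ ∀ j i, 0 < (P ^ m) j i)
    (y₀ z₀ : V → ℝ) (hz₀ : ∀ i, 0 < z₀ i) :
    (∀ j : V,
      Tendsto (fun k : ℕ => ((P ^ k) *ᵥ y₀) j / ((P ^ k) *ᵥ z₀) j)
        atTop (nhds ((∑ ℓ, y₀ ℓ) / (∑ ℓ, z₀ ℓ)))) ∧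
    (∀ (ℓ u πmax : V → ℝ), (∀ j, 0 < πmax j) →
      y₀ = (fun j => ℓ j + u j) → z₀ = πmax →
      ∀ j : V,
        Tendsto (fun k : ℕ => ((P ^ k) *ᵥ y₀) j / ((P ^ k) *ᵥ z₀) j)
          atTop (nhds (((∑ i, ℓ i) + (∑ i, u i)) / (∑ i, πmax i)))) :=
  ratio_consensus_general_general P hnonneg hcol hprim y₀ z₀ hz₀
end

section
/- Let V be a nonempty finite set and let adj : V → V → Prop describe a directed communication graph, where adj(j,i) means node j receives information from node i (i is an in-neighbor of j). Let D ∈ ℕ and assume that for all i, j ∈ V there exist m ≤ D and a sequence v₀ = i, v₁, …, v_m = j with adj(v_{t+1}, v_t) for every t < m (every node is reachable from every other within D hops). Let x : ℕ → V → ℝ satisfy the synchronous max-consensus update x(k+1)(j) = max over the set {x(k)(j)} ∪ {x(k)(i) : adj(j,i)} for every k and j. Then for every k ≥ D and every j ∈ V, x(k)(j) = max_{i∈V} x(0)(i). -/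
/-!
The states never decrease, never exceed the initial maximum, and a value travels one hop per
step. Following a path of length `m ≤ D` from a node holding the initial maximum to `j`,
node `j` holds that maximum from step `m` on.
-/

open Finset

section MaxConsensus

variable {V α : Type*} [Fintype V] [LinearOrder α] (adj : V → V → Prop) [DecidableRel adj]

def maxConsensusStep (y : V → α) (j : V) : α :=
  (insert (y j) ((univ.filter (fun i => adj j i)).image y)).max' (insert_nonempty _ _)

variable {adj}

theorem le_maxConsensusStep_self (y : V → α) (j : V) : y j ≤ maxConsensusStep adj y j :=
  le_max' _ _ (mem_insert_self _ _)

theorem le_maxConsensusStep_of_adj {y : V → α} {i j : V} (h : adj j i) :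
    y i ≤ maxConsensusStep adj y j :=
  le_max' _ _ (mem_insert_of_mem (mem_image_of_mem _ (by simpa using h)))

theorem maxConsensusStep_le {y : V → α} {c : α} (hy : ∀ i, y i ≤ c) (j : V) :
    maxConsensusStep adj y j ≤ c := by
  refine max'_le _ _ _ fun a ha => ?_
  rcases mem_insert.mp ha with rfl | ha
  · exact hy j
  · obtain ⟨i, -, rfl⟩ := mem_image.mp ha
    exact hy i

variable {x : ℕ → V → α} (hx : ∀ k, x (k + 1) = maxConsensusStep adj (x k))
include hx

theorem monotone_maxConsensus (j : V) : Monotone fun k => x k j :=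
  monotone_nat_of_le_succ fun k => (hx k).symm ▸ le_maxConsensusStep_self (x k) j

theorem maxConsensus_le {c : α} (h₀ : ∀ i, x 0 i ≤ c) (k : ℕ) (j : V) : x k j ≤ c := by
  induction k generalizing j with
  | zero => exact h₀ j
  | succ k ih => exact (hx k).symm ▸ maxConsensusStep_le ih j

theorem le_maxConsensus_of_path {m : ℕ} {v : ℕ → V} (hv : ∀ t < m, adj (v (t + 1)) (v t)) :
    ∀ t ≤ m, x 0 (v 0) ≤ x t (v t)
  | 0, _ => le_rfl
  | t + 1, ht => (le_maxConsensus_of_path hv t (by omega)).trans <|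
      (hx t).symm ▸ le_maxConsensusStep_of_adj (hv t ht)

end MaxConsensus

/-- Synchronous max-consensus: if every node is reachable from every other
node within `D` hops, and every node updates its state to the maximum of its
own state and its in-neighbors' states, then after at most `D` steps every
node holds the maximum of the initial values. -/
theorem sync_max_consensus
    {V : Type*} [Fintype V] [Nonempty V]
    (adj : V → V → Prop) [DecidableRel adj] (D : ℕ)
    (hconn : ∀ i j : V, ∃ m ≤ D, ∃ v : ℕ → V,
      v 0 = i ∧ v m = j ∧ ∀ t < m, adj (v (t + 1)) (v t))
    (x : ℕ → V → ℝ)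
    (hupd : ∀ k (j : V), x (k + 1) j =
      (insert (x k j) ((Finset.univ.filter (fun i => adj j i)).image (x k))).max'
        (Finset.insert_nonempty _ _)) :
    ∀ k, D ≤ k → ∀ j : V, x k j = Finset.univ.sup' Finset.univ_nonempty (x 0) := by
  have hx : ∀ k, x (k + 1) = maxConsensusStep adj (x k) := fun k => funext (hupd k)
  intro k hk j
  refine le_antisymm (maxConsensus_le hx (fun i => le_sup' _ (mem_univ i)) k j) ?_
  obtain ⟨i₀, -, hi₀⟩ := exists_mem_eq_sup' univ_nonempty (x 0)
  obtain ⟨m, hmD, v, hv₀, hvm, hv⟩ := hconn i₀ j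
  calc univ.sup' univ_nonempty (x 0) = x 0 (v 0) := by rw [hi₀, hv₀]
    _ ≤ x m (v m) := le_maxConsensus_of_path hx hv m le_rfl
    _ = x m j := by rw [hvm]
    _ ≤ x k j := monotone_maxConsensus hx j (hmD.trans hk)
end

section
/- Let V be a nonempty finite set and let adj : V → V → Prop describe a directed communication graph, where adj(j,i) means node j receives information from node i. Let D ∈ ℕ and assume that for all i, j ∈ V there exist m ≤ D and a sequence v₀ = i, …, v_m = j with adj(v_{t+1}, v_t) for every t < m. Let τ̄ ∈ ℕ and let τ : V → V → ℕ → ℕ be delay functions with τ(j,i,k) ≤ min(τ̄, k) for all j, i, k. Let x : ℕ → V → ℝ satisfy the asynchronous max-consensus update x(k+1)(j) = max over {x(k)(j)} ∪ {x(k − τ(j,i,k))(i) : adj(j,i)} for every k and j. Then for every k ≥ (1+τ̄)·D and every j ∈ V, x(k)(j) = max_{i∈V} x(0)(i). -/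
/-!
States never decrease, and every state is one of the earlier states, so no state exceeds the
initial maximum. If `j` listens to `i`, then at time `k + τ̄` node `j` reads a state of `i` from
time at least `k`, so whatever `i` holds at time `k` has reached `j` by time `k + τ̄ + 1`.
Following a path of length at most `D` from a node holding the initial maximum, that maximum
reaches every node by time `(1 + τ̄) D`.
-/

def AsyncMaxStep {V α : Type*} [Fintype V] [LinearOrder α] (adj : V → V → Prop)
    [DecidableRel adj] (τ : V → V → ℕ → ℕ) (x : ℕ → V → α) : Prop :=
  ∀ k j, x (k + 1) j =
    (insert (x k j)
      ((Finset.univ.filter (fun i => adj j i)).image (fun i => x (k - τ j i k) i))).max'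
      (Finset.insert_nonempty _ _)

namespace AsyncMaxStep

variable {V α : Type*} [Fintype V] [LinearOrder α] {adj : V → V → Prop} [DecidableRel adj]
  {τ : V → V → ℕ → ℕ} {x : ℕ → V → α}

theorem le_succ (h : AsyncMaxStep adj τ x) (k : ℕ) (j : V) : x k j ≤ x (k + 1) j := by
  rw [h]
  exact Finset.le_max' _ _ (Finset.mem_insert_self _ _)

theorem monotone (h : AsyncMaxStep adj τ x) (j : V) : Monotone (x · j) :=
  monotone_nat_of_le_succ fun k => h.le_succ k j

theorem delayed_le_succ (h : AsyncMaxStep adj τ x) {i j : V} (hadj : adj j i) (k : ℕ) :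
    x (k - τ j i k) i ≤ x (k + 1) j := by
  rw [h]
  have hi : i ∈ Finset.univ.filter (fun i => adj j i) :=
    Finset.mem_filter.mpr ⟨Finset.mem_univ i, hadj⟩
  exact Finset.le_max' _ _ (Finset.mem_insert_of_mem
    (Finset.mem_image_of_mem (fun i => x (k - τ j i k) i) hi))

theorem le_of_forall_initial_le (h : AsyncMaxStep adj τ x) {M : α} (hM : ∀ i, x 0 i ≤ M)
    (k : ℕ) (j : V) : x k j ≤ M := by
  induction k using Nat.strong_induction_on generalizing j with
  | _ k ih =>
    cases k with
    | zero => exact hM j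
    | succ k =>
      rw [h]
      refine Finset.max'_le _ _ _ fun y hy => ?_
      rcases Finset.mem_insert.mp hy with rfl | hy
      · exact ih k k.lt_succ_self j
      · obtain ⟨i, -, rfl⟩ := Finset.mem_image.mp hy
        exact ih _ (Nat.lt_succ_of_le (Nat.sub_le _ _)) i

theorem le_add_of_adj (h : AsyncMaxStep adj τ x) {τbar : ℕ} (hτ : ∀ j i k, τ j i k ≤ τbar)
    {i j : V} (hadj : adj j i) (k : ℕ) : x k i ≤ x (k + τbar + 1) j :=
  calc x k i ≤ x (k + τbar - τ j i (k + τbar)) i :=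
        h.monotone i (by have := hτ j i (k + τbar); omega)
    _ ≤ x (k + τbar + 1) j := h.delayed_le_succ hadj (k + τbar)

theorem le_of_path (h : AsyncMaxStep adj τ x) {τbar : ℕ} (hτ : ∀ j i k, τ j i k ≤ τbar)
    {v : ℕ → V} {m : ℕ} (hv : ∀ t < m, adj (v (t + 1)) (v t)) :
    x 0 (v 0) ≤ x ((1 + τbar) * m) (v m) := by
  induction m with
  | zero => rfl
  | succ m ih =>
    calc x 0 (v 0) ≤ x ((1 + τbar) * m) (v m) := ih fun t ht => hv t (by omega)
      _ ≤ x ((1 + τbar) * m + τbar + 1) (v (m + 1)) := h.le_add_of_adj hτ (hv m m.lt_succ_self) _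
      _ = x ((1 + τbar) * (m + 1)) (v (m + 1)) := by ring_nf

end AsyncMaxStep

/-- Asynchronous max-consensus with bounded time-varying delays: if every node
is reachable from every other node within `D` hops, delays are bounded by `τ̄`,
and every node updates its state to the maximum of its own state and possibly
outdated in-neighbor states, then after at most `(1+τ̄)·D` steps every node
holds the maximum of the initial values. -/
theorem async_max_consensus
    {V : Type*} [Fintype V] [Nonempty V]
    (adj : V → V → Prop) [DecidableRel adj] (D : ℕ)
    (hconn : ∀ i j : V, ∃ m ≤ D, ∃ v : ℕ → V,
      v 0 = i ∧ v m = j ∧ ∀ t < m, adj (v (t + 1)) (v t))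
    (τbar : ℕ) (τ : V → V → ℕ → ℕ)
    (hτ : ∀ (j i : V) (k : ℕ), τ j i k ≤ min τbar k)
    (x : ℕ → V → ℝ)
    (hupd : ∀ k (j : V), x (k + 1) j =
      (insert (x k j)
        ((Finset.univ.filter (fun i => adj j i)).image
          (fun i => x (k - τ j i k) i))).max'
        (Finset.insert_nonempty _ _)) :
    ∀ k, (1 + τbar) * D ≤ k → ∀ j : V,
      x k j = Finset.univ.sup' Finset.univ_nonempty (x 0) := by
  have hstep : AsyncMaxStep adj τ x := hupd
  have hτbar : ∀ j i k, τ j i k ≤ τbar := fun j i k => (hτ j i k).trans (min_le_left _ _)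
  intro k hk j
  obtain ⟨i₀, -, hi₀⟩ := Finset.exists_mem_eq_sup' Finset.univ_nonempty (x 0)
  obtain ⟨m, hm, v, rfl, rfl, hv⟩ := hconn i₀ j
  refine le_antisymm
    (hstep.le_of_forall_initial_le (fun i => Finset.le_sup' _ (Finset.mem_univ i)) k _) ?_
  calc Finset.univ.sup' Finset.univ_nonempty (x 0) = x 0 (v 0) := hi₀
    _ ≤ x ((1 + τbar) * m) (v m) := hstep.le_of_path hτbar hv
    _ ≤ x k (v m) := hstep.monotone _ ((Nat.mul_le_mul_left _ hm).trans hk)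
end

section
/- Let V be a nonempty finite set and let P be a V×V real matrix that is nonnegative, column stochastic (Σ_{j∈V} P(j,i) = 1 for every i), primitive (some power P^m has all entries strictly positive), and with strictly positive diagonal (P(j,j) > 0 for all j). Let τ̄ ∈ ℕ and let τ : V → V → ℕ → ℕ be delay functions with τ(j,i,m) ≤ τ̄ for all j, i, m. Define y : ℕ → V → ℝ by the delayed iteration y(k+1)(j) = P(j,j)·y(k)(j) + Σ_{i≠j} P(j,i) · ( Σ_{m ≤ k, m + τ(j,i,m) = k} y(m)(i) ), with initial condition y(0) = y₀ : V → ℝ, and define z : ℕ → V → ℝ by the same delayed iteration with the same delays and initial condition z(0) = 𝟙 (all ones). Then for every j ∈ V, the ratio y(k)(j) / z(k)(j) converges, as k → ∞, to (Σ_{ℓ∈V} y₀(ℓ)) / |V|. -/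
/-!
Append to the state one buffer coordinate `(j, d)` for every node `j` and remaining delay
`d < τ̄`: a value sent to `j` with delay `τ ≥ 1` is parked in slot `τ - 1` and moves down one
slot per step until it reaches `j`. On this augmented state every delayed iteration becomes
`x (k + 1) = A k x k` with column-stochastic matrices `A k`, started from the initial values on
the nodes and zero buffers. Primitivity, the positive diagonal and the delay bound give a
window length `B` and a `δ > 0` such that every node row of every product of `B` consecutive
`A k` is entrywise at least `δ`. Such a product contracts the `ℓ¹` norm of zero-sum vectors by
the factor `1 - |V| δ`, so `y - L z`, a delayed iteration started at the zero-sum vector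
`y₀ - L` with `L` the average, tends to `0`, while `z ≥ δ |V|` after the first window.
Hence `y / z → L`.
-/

open Filter Matrix Finset Topology

namespace Matrix

variable {ι : Type*} [Fintype ι]

/-- Because `∑ v = 0`, subtracting `c p` from row `p` does not change `M *ᵥ v`; the shifted
matrix is nonnegative with column sums `1 - ∑ c`. -/
theorem sum_abs_mulVec_le_of_sum_eq_zero {M : Matrix ι ι ℝ} (hM : ∀ q, ∑ p, M p q = 1)
    (c : ι → ℝ) (hc : ∀ p q, c p ≤ M p q) {v : ι → ℝ} (hv : ∑ q, v q = 0) :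
    ∑ p, |(M *ᵥ v) p| ≤ (1 - ∑ p, c p) * ∑ q, |v q| := by
  have hshift : ∀ p, (M *ᵥ v) p = ∑ q, (M p q - c p) * v q := by
    intro p
    simp only [sub_mul, sum_sub_distrib, ← mul_sum, hv, mul_zero, sub_zero]
    rfl
  calc ∑ p, |(M *ᵥ v) p| ≤ ∑ p, ∑ q, (M p q - c p) * |v q| := by
        gcongr with p
        rw [hshift]
        refine (abs_sum_le_sum_abs _ _).trans_eq (sum_congr rfl fun q _ => ?_)
        rw [abs_mul, abs_of_nonneg (sub_nonneg.2 (hc p q))]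
    _ = (1 - ∑ p, c p) * ∑ q, |v q| := by
        rw [sum_comm, mul_sum]
        refine sum_congr rfl fun q _ => ?_
        rw [← sum_mul, sum_sub_distrib, hM]

theorem mul_sum_le_mulVec_apply {M : Matrix ι ι ℝ} {p : ι} {δ : ℝ} (hδ : ∀ q, δ ≤ M p q)
    {x : ι → ℝ} (hx : ∀ q, 0 ≤ x q) : δ * ∑ q, x q ≤ (M *ᵥ x) p := by
  rw [mul_sum]
  exact sum_le_sum fun q _ => mul_le_mul_of_nonneg_right (hδ q) (hx q)

theorem exists_mul_apply_pos {M N : Matrix ι ι ℝ} (hM : ∀ p q, 0 ≤ M p q)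
    (hN : ∀ p q, 0 ≤ N p q) {p q : ι} (h : 0 < (M * N) p q) : ∃ r, 0 < M p r ∧ 0 < N r q := by
  obtain ⟨r, -, hr⟩ := (sum_pos_iff_of_nonneg fun r _ => mul_nonneg (hM p r) (hN r q)).1 h
  exact ⟨r, pos_of_mul_pos_left hr (hN r q), pos_of_mul_pos_right hr (hM p r)⟩

theorem mul_apply_pos {M N : Matrix ι ι ℝ} (hM : ∀ p q, 0 ≤ M p q) (hN : ∀ p q, 0 ≤ N p q)
    {p r q : ι} (hpr : 0 < M p r) (hrq : 0 < N r q) : 0 < (M * N) p q :=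
  (sum_pos_iff_of_nonneg fun r _ => mul_nonneg (hM p r) (hN r q)).2
    ⟨r, mem_univ r, mul_pos hpr hrq⟩

end Matrix

namespace DelayedConsensus

theorem tendsto_div_of_tendsto_sub_mul {α : Type*} {l : Filter α} {y z : α → ℝ} {L c : ℝ}
    (hc : 0 < c) (hz : ∀ᶠ k in l, c ≤ z k) (h : Tendsto (fun k => y k - L * z k) l (𝓝 0)) :
    Tendsto (fun k => y k / z k) l (𝓝 L) := by
  have hbound : Tendsto (fun k => |y k - L * z k| / c) l (𝓝 0) := by
    simpa using h.abs.div_const c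
  have herr : Tendsto (fun k => y k / z k - L) l (𝓝 0) := by
    refine squeeze_zero_norm' ?_ hbound
    filter_upwards [hz] with k hk
    have hzk : 0 < z k := hc.trans_le hk
    rw [Real.norm_eq_abs, show y k / z k - L = (y k - L * z k) / z k by field_simp,
      abs_div, abs_of_pos hzk]
    exact div_le_div_of_nonneg_left (abs_nonneg _) hc hk
  simpa using herr.add_const L

theorem exists_pos_forall_pos_le {α : Type*} [Fintype α] (f : α → ℝ) :
    ∃ a > 0, ∀ x, 0 < f x → a ≤ f x := by
  classical
  by_cases h : (univ.filter (0 < f ·)).Nonempty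
  · obtain ⟨x, hx, hmin⟩ := (univ.filter (0 < f ·)).exists_min_image f h
    exact ⟨f x, (mem_filter.1 hx).2, fun y hy => hmin y (mem_filter.2 ⟨mem_univ y, hy⟩)⟩
  · exact ⟨1, one_pos, fun y hy => absurd ⟨y, mem_filter.2 ⟨mem_univ y, hy⟩⟩ h⟩

theorem sum_fin_ite_val_eq {n t : ℕ} (f : ℕ → ℝ) :
    ∑ d : Fin n, (if (d : ℕ) = t then f d else 0) = if t < n then f t else 0 := by
  rw [Fin.sum_univ_eq_sum_range (fun d => if d = t then f d else 0), sum_ite_eq']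
  simp

theorem sum_filter_range_succ_eq (f : ℕ → ℝ) (g : ℕ → ℕ) (k n : ℕ) :
    ∑ m ∈ (range (k + 1)).filter (fun m => m + g m = n), f m =
      ∑ m ∈ (range k).filter (fun m => m + g m = n), f m + if k + g k = n then f k else 0 := by
  rw [sum_filter, sum_range_succ, ← sum_filter]

section Transition

variable {M : Type*} [Monoid M]

def transition (A : ℕ → M) (s : ℕ) : ℕ → M
  | 0 => 1
  | n + 1 => A (s + n) * transition A s n

theorem transition_succ (A : ℕ → M) (s n : ℕ) :
    transition A s (n + 1) = A (s + n) * transition A s n := rfl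

theorem transition_one (A : ℕ → M) (s : ℕ) : transition A s 1 = A s := by
  simp [transition]

theorem transition_add (A : ℕ → M) (s m n : ℕ) :
    transition A s (m + n) = transition A (s + m) n * transition A s m := by
  induction n with
  | zero => simp [transition]
  | succ n ih => rw [← add_assoc, transition, ih, transition, mul_assoc, add_assoc]

theorem transition_mem {S : Submonoid M} {A : ℕ → M} (hA : ∀ k, A k ∈ S) (s n : ℕ) :
    transition A s n ∈ S := by
  induction n with
  | zero => exact S.one_mem
  | succ n ih => exact S.mul_mem (hA _) ih

end Transition

section MatrixTransition

variable {ι : Type*} [Fintype ι] [DecidableEq ι] {A : ℕ → Matrix ι ι ℝ}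

theorem transition_mulVec_of_mulVec_eq {x : ℕ → ι → ℝ} (hx : ∀ k, A k *ᵥ x k = x (k + 1))
    (s n : ℕ) : transition A s n *ᵥ x s = x (s + n) := by
  induction n with
  | zero => simp [transition]
  | succ n ih => rw [transition_succ, ← mulVec_mulVec, ih, hx, add_assoc]

theorem transition_apply_nonneg (hA : ∀ k p q, 0 ≤ A k p q) (s n : ℕ) (p q : ι) :
    0 ≤ transition A s n p q := by
  induction n generalizing p with
  | zero => by_cases h : p = q <;> simp [transition, one_apply, h]
  | succ n ih => exact sum_nonneg fun r _ => mul_nonneg (hA _ _ _) (ih r)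

theorem transition_apply_pos_of_pos (hA : ∀ k p q, 0 ≤ A k p q) {s m n : ℕ} {p r q : ι}
    (hpr : 0 < transition A (s + m) n p r) (hrq : 0 < transition A s m r q) :
    0 < transition A s (m + n) p q := by
  rw [transition_add]
  exact mul_apply_pos (transition_apply_nonneg hA _ _) (transition_apply_nonneg hA _ _) hpr hrq

theorem pow_le_transition_apply_of_pos (hA : ∀ k p q, 0 ≤ A k p q) {a : ℝ} (ha : 0 ≤ a)
    (haA : ∀ k p q, 0 < A k p q → a ≤ A k p q) (s n : ℕ) {p q : ι}
    (h : 0 < transition A s n p q) : a ^ n ≤ transition A s n p q := by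
  induction n generalizing p with
  | zero =>
    by_cases hpq : p = q
    · subst hpq; simp [transition]
    · simp [transition, one_apply, hpq] at h
  | succ n ih =>
    obtain ⟨r, hpr, hrq⟩ :=
      exists_mul_apply_pos (hA _) (transition_apply_nonneg hA s n) h
    calc a ^ (n + 1) = a * a ^ n := pow_succ' a n
      _ ≤ A (s + n) p r * transition A s n r q :=
          mul_le_mul (haA _ _ _ hpr) (ih hrq) (pow_nonneg ha n) (hA _ _ _)
      _ ≤ transition A s (n + 1) p q :=
          single_le_sum (f := fun r => A (s + n) p r * transition A s n r q)
            (fun r _ => mul_nonneg (hA _ _ _) (transition_apply_nonneg hA s n r q)) (mem_univ r)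

theorem mul_sum_le_transition_mulVec_apply (hA : ∀ k, A k ∈ colStochastic ℝ ι) {B : ℕ}
    {p : ι} {δ : ℝ} (hδ : ∀ s q, δ ≤ transition A s B p q) {x : ι → ℝ} (hx : ∀ q, 0 ≤ x q)
    {k : ℕ} (hk : B ≤ k) : δ * ∑ q, x q ≤ (transition A 0 k *ᵥ x) p := by
  obtain ⟨n, rfl⟩ := Nat.exists_eq_add_of_le' hk
  have hsplit := transition_add A 0 n B
  rw [zero_add] at hsplit
  rw [hsplit, ← mulVec_mulVec,
    ← sum_mulVec_of_mem_colStochastic (transition_mem hA 0 n) (x := x)]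
  exact mul_sum_le_mulVec_apply (hδ n)
    (nonneg_mulVec_of_mem_colStochastic (transition_mem hA 0 n) hx)

theorem tendsto_sum_abs_transition_mulVec (hA : ∀ k, A k ∈ colStochastic ℝ ι) {B : ℕ}
    (hB : 0 < B) {c : ι → ℝ} (hc : ∀ s p q, c p ≤ transition A s B p q)
    (hc0 : 0 < ∑ p, c p) {v : ι → ℝ} (hv : ∑ q, v q = 0) :
    Tendsto (fun k => ∑ p, |(transition A 0 k *ᵥ v) p|) atTop (𝓝 0) := by
  have hT := transition_mem hA
  set e := fun k => ∑ p, |(transition A 0 k *ᵥ v) p| with he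
  have hstep : ∀ s n (c' : ι → ℝ), (∀ p q, c' p ≤ transition A s n p q) →
      e (s + n) ≤ (1 - ∑ p, c' p) * e s := by
    intro s n c' hc'
    have hsplit := transition_add A 0 s n
    rw [zero_add] at hsplit
    simp only [he, hsplit, ← mulVec_mulVec]
    refine sum_abs_mulVec_le_of_sum_eq_zero (sum_col_of_mem_colStochastic (hT s n)) c' hc' ?_
    rw [sum_mulVec_of_mem_colStochastic (hT 0 s), hv]
  set r := 1 - ∑ p, c p
  have hr0 : 0 ≤ r := by
    obtain ⟨q, -, -⟩ := exists_ne_zero_of_sum_ne_zero hc0.ne'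
    refine sub_nonneg.2 ?_
    calc ∑ p, c p ≤ ∑ p, transition A 0 B p q := sum_le_sum fun p _ => hc 0 p q
      _ = 1 := sum_col_of_mem_colStochastic (hT 0 B) q
  have hgeom : ∀ n, e (B * n) ≤ r ^ n * e 0 := by
    intro n
    induction n with
    | zero => simp
    | succ n ih =>
      calc e (B * (n + 1)) ≤ r * e (B * n) := hstep _ _ c (hc _)
        _ ≤ r * (r ^ n * e 0) := mul_le_mul_of_nonneg_left ih hr0
        _ = r ^ (n + 1) * e 0 := by ring
  have hbound : ∀ k, e k ≤ r ^ (k / B) * e 0 := by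
    intro k
    calc e k = e (B * (k / B) + k % B) := by rw [Nat.div_add_mod]
      _ ≤ e (B * (k / B)) := by
          simpa using hstep (B * (k / B)) (k % B) 0 fun p q =>
            transition_apply_nonneg (fun k => (hA k).1) _ _ p q
      _ ≤ r ^ (k / B) * e 0 := hgeom _
  have hr1 : r < 1 := sub_lt_self 1 hc0
  refine squeeze_zero (fun k => sum_nonneg fun p _ => abs_nonneg _) hbound ?_
  simpa using ((tendsto_pow_atTop_nhds_zero_of_lt_one hr0 hr1).comp
    (Nat.tendsto_div_const_atTop hB.ne')).mul_const (e 0)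

end MatrixTransition

variable {V : Type*} [DecidableEq V]

/-- The augmented matrix at time `k`. Coordinate `inl j` is the value held by node `j`;
coordinate `inr (j, d)` is the mass already sent to `j` that `j` incorporates `d` steps later. -/
def delayMatrix (P : Matrix V V ℝ) (τbar : ℕ) (τ : V → V → ℕ → ℕ) (k : ℕ) :
    Matrix (V ⊕ V × Fin τbar) (V ⊕ V × Fin τbar) ℝ :=
  fromBlocks (fun j i => if i = j ∨ τ j i k = 0 then P j i else 0)
    (fun j ie => if ie.1 = j ∧ (ie.2 : ℕ) = 0 then 1 else 0)
    (fun jd i => if i ≠ jd.1 ∧ (jd.2 : ℕ) + 1 = τ jd.1 i k then P jd.1 i else 0)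
    (fun jd ie => if ie.1 = jd.1 ∧ (ie.2 : ℕ) = jd.2 + 1 then 1 else 0)

variable {P : Matrix V V ℝ} {τbar : ℕ} {τ : V → V → ℕ → ℕ} {k : ℕ}

@[simp] theorem delayMatrix_inl_inl (j i : V) :
    delayMatrix P τbar τ k (.inl j) (.inl i) = if i = j ∨ τ j i k = 0 then P j i else 0 := rfl

@[simp] theorem delayMatrix_inl_inr (j i : V) (e : Fin τbar) :
    delayMatrix P τbar τ k (.inl j) (.inr (i, e)) = if i = j ∧ (e : ℕ) = 0 then 1 else 0 := rfl

@[simp] theorem delayMatrix_inr_inl (j : V) (d : Fin τbar) (i : V) :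
    delayMatrix P τbar τ k (.inr (j, d)) (.inl i) =
      if i ≠ j ∧ (d : ℕ) + 1 = τ j i k then P j i else 0 := rfl

@[simp] theorem delayMatrix_inr_inr (j : V) (d : Fin τbar) (i : V) (e : Fin τbar) :
    delayMatrix P τbar τ k (.inr (j, d)) (.inr (i, e)) =
      if i = j ∧ (e : ℕ) = d + 1 then 1 else 0 := rfl

theorem delayMatrix_nonneg (hnonneg : ∀ j i, 0 ≤ P j i) (k : ℕ) (p q : V ⊕ V × Fin τbar) :
    0 ≤ delayMatrix P τbar τ k p q := by
  rcases p with j | ⟨j, d⟩ <;> rcases q with i | ⟨i, e⟩ <;> simp only [delayMatrix_inl_inl,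
    delayMatrix_inl_inr, delayMatrix_inr_inl, delayMatrix_inr_inr] <;> split_ifs <;> simp [hnonneg]

theorem delayMatrix_apply_ge_of_pos {a : ℝ} (ha : a ≤ 1)
    (haP : ∀ j i, 0 < P j i → a ≤ P j i) (k : ℕ) (p q : V ⊕ V × Fin τbar)
    (h : 0 < delayMatrix P τbar τ k p q) : a ≤ delayMatrix P τbar τ k p q := by
  rcases p with j | ⟨j, d⟩ <;> rcases q with i | ⟨i, e⟩ <;>
    simp only [delayMatrix_inl_inl, delayMatrix_inl_inr, delayMatrix_inr_inl,
      delayMatrix_inr_inr] at h ⊢ <;> split_ifs at h ⊢ <;> first | exact haP _ _ h | simp_all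

variable [Fintype V]

theorem delayMatrix_mem_colStochastic (hnonneg : ∀ j i, 0 ≤ P j i)
    (hcol : ∀ i, ∑ j, P j i = 1) (hτ : ∀ j i m, τ j i m ≤ τbar) (k : ℕ) :
    delayMatrix P τbar τ k ∈ colStochastic ℝ (V ⊕ V × Fin τbar) := by
  refine mem_colStochastic_iff_sum.2 ⟨delayMatrix_nonneg hnonneg k, ?_⟩
  rintro (i | ⟨i, e⟩)
  · rw [Fintype.sum_sum_type, Fintype.sum_prod_type, ← sum_add_distrib, ← hcol i]
    refine sum_congr rfl fun j _ => ?_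
    simp only [delayMatrix_inl_inl, delayMatrix_inr_inl]
    by_cases hij : i = j
    · simp [hij]
    rcases h : τ j i k with _ | t
    · simp [hij]
    · have ht : t < τbar := by have := hτ j i k; omega
      simp [hij, sum_fin_ite_val_eq (fun _ => P j i), ht]
  · simp only [Fintype.sum_sum_type, Fintype.sum_prod_type_right, delayMatrix_inl_inr,
      delayMatrix_inr_inr, ite_and, sum_ite_eq, mem_univ, if_true]
    rcases e with ⟨_ | e, he⟩
    · simp
    · simp only [Nat.add_one_ne_zero, if_false, zero_add, Nat.add_right_cancel_iff,
        eq_comm (a := e)]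
      rw [sum_fin_ite_val_eq (fun _ => 1), if_pos (by omega)]

variable (P τ) in
def DelayedIteration (w : ℕ → V → ℝ) : Prop :=
  ∀ k j, w (k + 1) j = P j j * w k j + ∑ i ∈ univ.erase j,
    P j i * ∑ m ∈ (range (k + 1)).filter (fun m => m + τ j i m = k), w m i

variable (P τ) in
def pending (w : ℕ → V → ℝ) (k : ℕ) (j : V) (d : ℕ) : ℝ :=
  ∑ i ∈ univ.erase j, P j i * ∑ m ∈ (range k).filter (fun m => m + τ j i m = k + d), w m i

variable (P τbar τ) in
def augmentedState (w : ℕ → V → ℝ) (k : ℕ) : V ⊕ V × Fin τbar → ℝ :=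
  Sum.elim (w k) fun jd => pending P τ w k jd.1 jd.2

theorem pending_eq_zero (hτ : ∀ j i m, τ j i m ≤ τbar) (w : ℕ → V → ℝ) (k : ℕ) (j : V)
    {d : ℕ} (hd : τbar ≤ d) : pending P τ w k j d = 0 := by
  refine sum_eq_zero fun i _ => ?_
  rw [filter_false_of_mem fun m hm => ?_, sum_empty, mul_zero]
  have := hτ j i m
  have := mem_range.1 hm
  omega

theorem sum_fin_ite_pending (hτ : ∀ j i m, τ j i m ≤ τbar) (w : ℕ → V → ℝ) (k : ℕ) (j : V)
    (t : ℕ) : ∑ d : Fin τbar, (if (d : ℕ) = t then pending P τ w k j d else 0) =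
      pending P τ w k j t := by
  rw [sum_fin_ite_val_eq (pending P τ w k j), ite_eq_left_iff]
  exact fun ht => (pending_eq_zero hτ w k j (not_lt.1 ht)).symm

theorem augmentedState_zero (w : ℕ → V → ℝ) :
    augmentedState P τbar τ w 0 = Sum.elim (w 0) 0 := by
  ext (j | jd) <;> simp [augmentedState, pending]

theorem delayMatrix_mulVec_augmentedState (hτ : ∀ j i m, τ j i m ≤ τbar) {w : ℕ → V → ℝ}
    (hw : DelayedIteration P τ w) (k : ℕ) :
    delayMatrix P τbar τ k *ᵥ augmentedState P τbar τ w k = augmentedState P τbar τ w (k + 1) := by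
  ext (j | ⟨j, d⟩)
  · simp only [augmentedState, mulVec, dotProduct, Fintype.sum_sum_type, Sum.elim_inl,
      Sum.elim_inr, delayMatrix_inl_inl, delayMatrix_inl_inr, Fintype.sum_prod_type_right, ite_and,
      ite_mul, one_mul, zero_mul, sum_ite_eq', mem_univ, if_true, sum_fin_ite_pending hτ]
    rw [hw k j, ← add_sum_erase _ _ (mem_univ j), if_pos (Or.inl rfl), add_assoc, pending,
      ← sum_add_distrib]
    refine congrArg _ (sum_congr rfl fun i hi => ?_)
    rw [sum_filter_range_succ_eq, add_zero, mul_add, add_comm]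
    simp only [ne_of_mem_erase hi, false_or, Nat.add_eq_left]
    split_ifs <;> ring
  · simp only [augmentedState, mulVec, dotProduct, Fintype.sum_sum_type, Sum.elim_inl,
      Sum.elim_inr, delayMatrix_inr_inl, delayMatrix_inr_inr, Fintype.sum_prod_type_right, ite_and,
      ite_mul, one_mul, zero_mul, sum_ite_eq', mem_univ, if_true, sum_fin_ite_pending hτ]
    rw [← add_sum_erase _ _ (mem_univ j), if_neg (not_not_intro rfl), zero_add, pending,
      pending, ← sum_add_distrib]
    refine sum_congr rfl fun i hi => ?_
    rw [if_pos (ne_of_mem_erase hi), sum_filter_range_succ_eq, mul_add, add_comm,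
      show k + 1 + (d : ℕ) = k + ((d : ℕ) + 1) by ring]
    simp only [Nat.add_left_cancel_iff, eq_comm (a := (d : ℕ) + 1)]
    split_ifs <;> ring

theorem DelayedIteration.apply_eq_transition_mulVec (hτ : ∀ j i m, τ j i m ≤ τbar)
    {w : ℕ → V → ℝ} (hw : DelayedIteration P τ w) (k : ℕ) (j : V) :
    w k j = (transition (delayMatrix P τbar τ) 0 k *ᵥ Sum.elim (w 0) 0) (.inl j) := by
  rw [← augmentedState_zero,
    transition_mulVec_of_mulVec_eq (delayMatrix_mulVec_augmentedState hτ hw), zero_add]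
  rfl

theorem DelayedIteration.sub_smul {y z : ℕ → V → ℝ} (hy : DelayedIteration P τ y)
    (hz : DelayedIteration P τ z) (c : ℝ) : DelayedIteration P τ (y - c • z) := by
  intro k j
  simp only [Pi.sub_apply, Pi.smul_apply, smul_eq_mul, hy k j, hz k j, mul_add, mul_sub,
    mul_sum, sum_sub_distrib, mul_left_comm c]
  ring

section Positivity

variable (hnonneg : ∀ j i, 0 ≤ P j i)
include hnonneg

theorem transition_delayMatrix_inl_self_pos (hdiag : ∀ j, 0 < P j j) (s n : ℕ) (j : V) :
    0 < transition (delayMatrix P τbar τ) s n (.inl j) (.inl j) := by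
  induction n with
  | zero => simp [transition]
  | succ n ih =>
    exact transition_apply_pos_of_pos (delayMatrix_nonneg hnonneg)
      (by simpa [transition_one] using hdiag j) ih

theorem transition_delayMatrix_pos_of_le (hdiag : ∀ j, 0 < P j j) {s n n' : ℕ} (hn : n ≤ n')
    {j : V} {q : V ⊕ V × Fin τbar} (h : 0 < transition (delayMatrix P τbar τ) s n (.inl j) q) :
    0 < transition (delayMatrix P τbar τ) s n' (.inl j) q := by
  obtain ⟨l, rfl⟩ := Nat.exists_eq_add_of_le hn
  exact transition_apply_pos_of_pos (delayMatrix_nonneg hnonneg)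
    (transition_delayMatrix_inl_self_pos hnonneg hdiag _ _ j) h

theorem transition_delayMatrix_inl_inr_pos (s : ℕ) (j : V) (e : Fin τbar) :
    0 < transition (delayMatrix P τbar τ) s (e + 1) (.inl j) (.inr (j, e)) := by
  obtain ⟨e, he⟩ := e
  induction e generalizing s with
  | zero => simp [transition_one]
  | succ e ih =>
    rw [add_comm]
    exact transition_apply_pos_of_pos (delayMatrix_nonneg hnonneg) (ih (s + 1) (by omega))
      (r := .inr (j, ⟨e, by omega⟩)) (by simp [transition_one])

theorem transition_delayMatrix_pos_of_pos (hdiag : ∀ j, 0 < P j j)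
    (hτ : ∀ j i m, τ j i m ≤ τbar) {j i : V} (hji : 0 < P j i) (s : ℕ) :
    0 < transition (delayMatrix P τbar τ) s (τbar + 1) (.inl j) (.inl i) := by
  by_cases hij : i = j
  · subst hij
    exact transition_delayMatrix_inl_self_pos hnonneg hdiag _ _ i
  refine transition_delayMatrix_pos_of_le hnonneg hdiag (n := τ j i s + 1)
    (Nat.succ_le_succ (hτ j i s)) ?_
  rcases h : τ j i s with _ | d
  · simpa [transition_one, h] using hji
  · have hd : d < τbar := by have := hτ j i s; omega
    rw [add_comm]
    exact transition_apply_pos_of_pos (delayMatrix_nonneg hnonneg)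
      (transition_delayMatrix_inl_inr_pos hnonneg (s + 1) j ⟨d, hd⟩)
      (by simpa [transition_one, hij, h] using hji)

theorem transition_delayMatrix_pos_of_pow_pos (hdiag : ∀ j, 0 < P j j)
    (hτ : ∀ j i m, τ j i m ≤ τbar) {n : ℕ} {j i : V} (hji : 0 < (P ^ n) j i) (s : ℕ) :
    0 < transition (delayMatrix P τbar τ) s (n * (τbar + 1)) (.inl j) (.inl i) := by
  induction n generalizing j i s with
  | zero =>
    obtain rfl : j = i := by by_contra h; simp [one_apply, h] at hji
    exact transition_delayMatrix_inl_self_pos hnonneg hdiag _ _ j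
  | succ n ih =>
    rw [pow_succ'] at hji
    obtain ⟨r, hjr, hri⟩ := exists_mul_apply_pos hnonneg (pow_apply_nonneg hnonneg n) hji
    rw [Nat.succ_mul]
    exact transition_apply_pos_of_pos (delayMatrix_nonneg hnonneg)
      (transition_delayMatrix_pos_of_pos hnonneg hdiag hτ hjr _) (ih hri s)

theorem transition_delayMatrix_window_pos (hdiag : ∀ j, 0 < P j j)
    (hτ : ∀ j i m, τ j i m ≤ τbar) {m : ℕ} (hm : ∀ j i, 0 < (P ^ m) j i) (s : ℕ) (j : V)
    (q : V ⊕ V × Fin τbar) :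
    0 < transition (delayMatrix P τbar τ) s ((m + 1) * (τbar + 1)) (.inl j) q := by
  rw [Nat.succ_mul]
  rcases q with i | ⟨i, e⟩
  · exact transition_delayMatrix_pos_of_le hnonneg hdiag (Nat.le_add_right _ _)
      (transition_delayMatrix_pos_of_pow_pos hnonneg hdiag hτ (hm j i) s)
  · refine transition_delayMatrix_pos_of_le hnonneg hdiag (n := (e + 1) + m * (τbar + 1))
      (by have := e.isLt; omega) ?_
    exact transition_apply_pos_of_pos (delayMatrix_nonneg hnonneg)
      (transition_delayMatrix_pos_of_pow_pos hnonneg hdiag hτ (hm j i) _)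
      (transition_delayMatrix_inl_inr_pos hnonneg s i e)

end Positivity

theorem exists_le_transition_delayMatrix (hnonneg : ∀ j i, 0 ≤ P j i) (hdiag : ∀ j, 0 < P j j)
    (hτ : ∀ j i m, τ j i m ≤ τbar) (hprim : ∃ m, ∀ j i, 0 < (P ^ m) j i) :
    ∃ B > 0, ∃ δ > 0, ∀ s j q, δ ≤ transition (delayMatrix P τbar τ) s B (.inl j) q := by
  obtain ⟨m, hm⟩ := hprim
  obtain ⟨a, ha, haP⟩ := exists_pos_forall_pos_le fun p : V × V => P p.1 p.2
  refine ⟨(m + 1) * (τbar + 1), by positivity, min a 1 ^ ((m + 1) * (τbar + 1)),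
    by positivity, fun s j q => ?_⟩
  exact pow_le_transition_apply_of_pos (delayMatrix_nonneg hnonneg) (by positivity)
    (delayMatrix_apply_ge_of_pos (min_le_right a 1)
      fun j i h => (min_le_left a 1).trans (haP (j, i) h)) s _
    (transition_delayMatrix_window_pos hnonneg hdiag hτ hm s j q)

section Convergence

variable (hnonneg : ∀ j i, 0 ≤ P j i) (hcol : ∀ i, ∑ j, P j i = 1) (hdiag : ∀ j, 0 < P j j)
  (hτ : ∀ j i m, τ j i m ≤ τbar) (hprim : ∃ m, ∀ j i, 0 < (P ^ m) j i)
include hnonneg hcol hdiag hτ hprim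

theorem DelayedIteration.tendsto_zero {w : ℕ → V → ℝ} (hw : DelayedIteration P τ w)
    (hw0 : ∑ i, w 0 i = 0) (j : V) : Tendsto (fun k => w k j) atTop (𝓝 0) := by
  obtain ⟨B, hB, δ, hδ, hwin⟩ := exists_le_transition_delayMatrix hnonneg hdiag hτ hprim
  have hc : ∀ s p q, Sum.elim (fun _ => δ) 0 p ≤ transition (delayMatrix P τbar τ) s B p q := by
    rintro s (j | p) q
    · exact hwin s j q
    · exact transition_apply_nonneg (delayMatrix_nonneg hnonneg) s B _ q
  have hc0 : 0 < ∑ p, Sum.elim (fun _ : V => δ) (0 : V × Fin τbar → ℝ) p := by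
    have : Nonempty V := ⟨j⟩
    simp only [Fintype.sum_sum_type, Sum.elim_inl, Sum.elim_inr, Pi.zero_apply, sum_const_zero,
      add_zero]
    exact sum_pos (fun _ _ => hδ) univ_nonempty
  refine squeeze_zero_norm (fun k => ?_) (tendsto_sum_abs_transition_mulVec
    (delayMatrix_mem_colStochastic hnonneg hcol hτ) hB hc hc0 (v := Sum.elim (w 0) 0)
    (by simpa [Fintype.sum_sum_type] using hw0))
  rw [hw.apply_eq_transition_mulVec hτ, Real.norm_eq_abs]
  exact single_le_sum (f := fun p => |_|) (fun p _ => abs_nonneg _) (mem_univ _)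

theorem DelayedIteration.exists_pos_eventually_le {w : ℕ → V → ℝ} (hw : DelayedIteration P τ w)
    (hw0 : ∀ i, 0 ≤ w 0 i) : ∃ δ > 0, ∀ j, ∀ᶠ k in atTop, δ * ∑ i, w 0 i ≤ w k j := by
  obtain ⟨B, -, δ, hδ, hwin⟩ := exists_le_transition_delayMatrix hnonneg hdiag hτ hprim
  refine ⟨δ, hδ, fun j => eventually_atTop.2 ⟨B, fun k hk => ?_⟩⟩
  rw [hw.apply_eq_transition_mulVec hτ]
  simpa [Fintype.sum_sum_type] using mul_sum_le_transition_mulVec_apply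
    (delayMatrix_mem_colStochastic hnonneg hcol hτ) (hwin · j)
    (x := Sum.elim (w 0) 0) (by rintro (i | i) <;> simp [hw0]) hk

end Convergence

end DelayedConsensus

theorem robust_ratio_consensus_average_general
    {V : Type*} [Fintype V] [DecidableEq V]
    (P : Matrix V V ℝ)
    (hnonneg : ∀ j i, 0 ≤ P j i)
    (hcol : ∀ i, ∑ j, P j i = 1)
    (hprim : ∃ m : ℕ, 1 ≤ m ∧ ∀ j i, 0 < (P ^ m) j i)
    (hdiag : ∀ j, 0 < P j j)
    (τbar : ℕ) (τ : V → V → ℕ → ℕ)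
    (hτ : ∀ (j i : V) (m : ℕ), τ j i m ≤ τbar)
    (y₀ : V → ℝ) (y z : ℕ → V → ℝ)
    (hy0 : y 0 = y₀) (hz0 : z 0 = fun _ => (1 : ℝ))
    (hy : ∀ k (j : V), y (k + 1) j =
      P j j * y k j + ∑ i ∈ Finset.univ.erase j,
        P j i * ∑ m ∈ (Finset.range (k + 1)).filter (fun m => m + τ j i m = k), y m i)
    (hz : ∀ k (j : V), z (k + 1) j =
      P j j * z k j + ∑ i ∈ Finset.univ.erase j,
        P j i * ∑ m ∈ (Finset.range (k + 1)).filter (fun m => m + τ j i m = k), z m i) :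
    ∀ j : V, Tendsto (fun k => y k j / z k j) atTop
      (nhds ((∑ ℓ, y₀ ℓ) / (Fintype.card V : ℝ))) := by
  intro j
  have hy : DelayedConsensus.DelayedIteration P τ y := hy
  have hz : DelayedConsensus.DelayedIteration P τ z := hz
  have hprim : ∃ m, ∀ j i, 0 < (P ^ m) j i := hprim.imp fun _ => And.right
  have hcard : (0 : ℝ) < Fintype.card V := Nat.cast_pos.2 (Fintype.card_pos_iff.2 ⟨j⟩)
  set L := (∑ ℓ, y₀ ℓ) / (Fintype.card V : ℝ)
  have herr : Tendsto (fun k => y k j - L * z k j) atTop (𝓝 0) :=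
    (hy.sub_smul hz L).tendsto_zero hnonneg hcol hdiag hτ hprim
      (by simp [hy0, hz0, sum_sub_distrib, L, mul_div_cancel₀ _ hcard.ne']) j
  obtain ⟨δ, hδ, hzδ⟩ := hz.exists_pos_eventually_le hnonneg hcol hdiag hτ hprim (by simp [hz0])
  exact DelayedConsensus.tendsto_div_of_tendsto_sub_mul (mul_pos hδ hcard)
    (by simpa [hz0] using hzδ j) herr

/-- Robustified (asynchronous) ratio consensus (Lemma 2): for a primitive
column-stochastic matrix `P` with positive diagonal, and bounded time-varying
delays `τ(j,i,m) ≤ τ̄`, the entrywise ratio of the two delayed iterations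
(with initial conditions `y₀` and the all-ones vector) converges at every node
to the average `(∑ ℓ, y₀ ℓ) / |V|`. -/
theorem robust_ratio_consensus_average
    {V : Type*} [Fintype V] [DecidableEq V] [Nonempty V]
    (P : Matrix V V ℝ)
    (hnonneg : ∀ j i, 0 ≤ P j i)
    (hcol : ∀ i, ∑ j, P j i = 1)
    (hprim : ∃ m : ℕ, 1 ≤ m ∧ ∀ j i, 0 < (P ^ m) j i)
    (hdiag : ∀ j, 0 < P j j)
    (τbar : ℕ) (τ : V → V → ℕ → ℕ)
    (hτ : ∀ (j i : V) (m : ℕ), τ j i m ≤ τbar)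
    (y₀ : V → ℝ) (y z : ℕ → V → ℝ)
    (hy0 : y 0 = y₀) (hz0 : z 0 = fun _ => (1 : ℝ))
    (hy : ∀ k (j : V), y (k + 1) j =
      P j j * y k j + ∑ i ∈ Finset.univ.erase j,
        P j i * ∑ m ∈ (Finset.range (k + 1)).filter (fun m => m + τ j i m = k), y m i)
    (hz : ∀ k (j : V), z (k + 1) j =
      P j j * z k j + ∑ i ∈ Finset.univ.erase j,
        P j i * ∑ m ∈ (Finset.range (k + 1)).filter (fun m => m + τ j i m = k), z m i) :
    ∀ j : V, Tendsto (fun k => y k j / z k j) atTop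
      (nhds ((∑ ℓ, y₀ ℓ) / (Fintype.card V : ℝ))) :=
  robust_ratio_consensus_average_general P hnonneg hcol hprim hdiag τbar τ hτ y₀ y z hy0 hz0 hy hz
end

section
/- Let V be a nonempty finite set and let P be a V×V real matrix that is nonnegative, column stochastic (Σ_{j∈V} P(j,i) = 1 for every i), primitive (some power P^m has all entries strictly positive), and with strictly positive diagonal (P(j,j) > 0 for all j). Let τ̄ ∈ ℕ and let τ : V → V → ℕ → ℕ be delay functions with τ(j,i,m) ≤ τ̄ for all j, i, m. Define y : ℕ → V → ℝ by the delayed iteration y(k+1)(j) = P(j,j)·y(k)(j) + Σ_{i≠j} P(j,i) · ( Σ_{m ≤ k, m + τ(j,i,m) = k} y(m)(i) ), with initial condition y(0) = y₀ : V → ℝ, and define z : ℕ → V → ℝ by the same delayed iteration with the same delays and initial condition z(0) = z₀ : V → ℝ where z₀(i) > 0 for all i. Let μ(k)(j) = y(k)(j) / z(k)(j). Then for every ε > 0 and every positive integer W (in particular W = (1+τ̄)·D for any positive integer D), there exists r₀ ∈ ℕ such that for all r ≥ r₀: max_{j∈V} μ(r·W)(j) − min_{j∈V} μ(r·W)(j)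 < ε. Consequently, the distributed termination test of Algorithm 2, which every W steps compares the (asynchronous) max- and min-consensus values of the ratios against ε, is passed after finitely many rounds, i.e. Algorithm 2 converges in finite time. -/
/-!
The solutions of the delayed iteration form a subspace, and a solution that is nonnegative on
`τbar + 1` consecutive steps stays nonnegative afterwards. Applied to `M • z - y`, this makes the
maximum `M` of `y / z` over a sliding window of `2 τbar + 1` steps nonincreasing, and likewise
the maximum of `-y / z`.

Conservation of mass (node values plus values in transit) bounds `z` by its initial total and
gives, in every window of `τbar + 1` steps, a node value holding a `1 / ((τbar + 1) |V|)` share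
of it. Since `P ^ L > 0` and the diagonal of `P` is positive, a nonnegative solution passes a
fraction `p₀ ^ (L (τbar + 1) + 3 τbar)` of that value to every node within `L (τbar + 1) + 2 τbar`
steps (`p₀` the least positive entry of `P`). For `M • z - y` this pulls `y / z` below `M` by a
fixed fraction of the spread, so the window spread contracts geometrically.
-/

open Finset Filter

theorem eventually_lt_of_le_mul {s : ℕ → ℝ} {q : ℝ} {K k₁ : ℕ} (hq0 : 0 ≤ q) (hq1 : q < 1)
    (hanti : AntitoneOn s (Set.Ici k₁)) (hstep : ∀ k, k₁ ≤ k → s (k + K) ≤ q * s k) :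
    ∀ ε > 0, ∀ᶠ k in atTop, s k < ε := by
  have hgeom : ∀ n, s (k₁ + n * K) ≤ q ^ n * s k₁ := by
    intro n
    induction n with
    | zero => simp
    | succ n ih =>
      calc s (k₁ + (n + 1) * K) ≤ q * s (k₁ + n * K) := by
            rw [Nat.succ_mul, ← add_assoc]; exact hstep _ (Nat.le_add_right _ _)
        _ ≤ q * (q ^ n * s k₁) := mul_le_mul_of_nonneg_left ih hq0
        _ = q ^ (n + 1) * s k₁ := by ring
  intro ε hε
  have hlim := (tendsto_pow_atTop_nhds_zero_of_lt_one hq0 hq1).mul_const (s k₁)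
  rw [zero_mul] at hlim
  obtain ⟨n, hn⟩ := (hlim.eventually (gt_mem_nhds hε)).exists
  filter_upwards [eventually_ge_atTop (k₁ + n * K)] with k hk
  have hk₁ : k₁ ≤ k₁ + n * K := Nat.le_add_right _ _
  exact (hanti hk₁ (hk₁.trans hk) hk).trans_lt ((hgeom n).trans_lt hn)

theorem sum_filter_arrival_add_sum_filter_pending (f : ℕ → ℝ) (d : ℕ → ℕ) (k : ℕ) :
    ∑ m ∈ (range (k + 1)).filter (fun m => m + d m = k), f m
      + ∑ m ∈ (range (k + 1)).filter (fun m => k + 1 ≤ m + d m), f m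
      = ∑ m ∈ (range k).filter (fun m => k ≤ m + d m), f m + f k := by
  have hsplit : ∀ m, (if m + d m = k then f m else 0) + (if k + 1 ≤ m + d m then f m else 0)
      = if k ≤ m + d m then f m else 0 := fun m => by split_ifs <;> first | omega | simp
  simp only [sum_filter]
  rw [← sum_add_distrib, sum_congr rfl fun m _ => hsplit m, sum_range_succ,
    if_pos (Nat.le_add_right k (d k))]

theorem exists_pos_le_of_pos {ι : Type*} [Finite ι] (f : ι → ℝ) :
    ∃ p, 0 < p ∧ p ≤ 1 ∧ ∀ x, 0 < f x → p ≤ f x := by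
  obtain ⟨o, ho⟩ :=
    Finite.exists_min fun o : Option ι => o.elim 1 fun x => if 0 < f x then f x else 1
  refine ⟨_, ?_, ho none, fun x hx => (ho (some x)).trans_eq (if_pos hx)⟩
  rcases o with _ | x
  · exact one_pos
  · dsimp only [Option.elim]
    split_ifs with hx
    exacts [hx, one_pos]

section Delayed

variable {V : Type*} [Fintype V]

section Window

variable [Nonempty V]

def windowSup (f : ℕ → V → ℝ) (w k : ℕ) : ℝ :=
  (Icc (k - w) k ×ˢ (univ : Finset V)).sup'
    ((nonempty_Icc.mpr (Nat.sub_le k w)).product univ_nonempty) fun p => f p.1 p.2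

/-- `sup f - inf f` over the window, written so that bounds on the minimum of `f` are bounds on
the maximum of `-f`. -/
def windowSpread (f : ℕ → V → ℝ) (w k : ℕ) : ℝ :=
  windowSup f w k + windowSup (-f) w k

variable {f : ℕ → V → ℝ} {w k t : ℕ}

theorem le_windowSup (j : V) (h₁ : k - w ≤ t) (h₂ : t ≤ k) : f t j ≤ windowSup f w k :=
  le_sup' (fun p : ℕ × V => f p.1 p.2) (b := (t, j))
    (mem_product.mpr ⟨mem_Icc.mpr ⟨h₁, h₂⟩, mem_univ j⟩)

theorem windowSup_le {b : ℝ} (h : ∀ t j, k - w ≤ t → t ≤ k → f t j ≤ b) : windowSup f w k ≤ b :=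
  sup'_le _ _ fun p hp => by
    rw [mem_product, mem_Icc] at hp
    exact h p.1 p.2 hp.1.1 hp.1.2

theorem sup'_sub_inf'_le_windowSpread :
    univ.sup' univ_nonempty (f k) - univ.inf' univ_nonempty (f k) ≤ windowSpread f w k := by
  obtain ⟨j, -, hj⟩ := exists_mem_eq_inf' (univ_nonempty (α := V)) (f k)
  rw [hj, sub_eq_add_neg]
  exact add_le_add (sup'_le _ _ fun i _ => le_windowSup i (Nat.sub_le k w) le_rfl)
    (le_windowSup (f := -f) j (Nat.sub_le k w) le_rfl)

end Window

variable [DecidableEq V]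

/-- Solutions of the delayed iteration: `m + τ j i m = k` selects the values sent by `i` at time
`m` that node `j` incorporates at time `k + 1`. -/
def delayedSolutions (P : Matrix V V ℝ) (τ : V → V → ℕ → ℕ) : Submodule ℝ (ℕ → V → ℝ) where
  carrier := {u | ∀ k j, u (k + 1) j = P j j * u k j + ∑ i ∈ univ.erase j,
    P j i * ∑ m ∈ (range (k + 1)).filter (fun m => m + τ j i m = k), u m i}
  add_mem' hu hv k j := by
    simp only [Pi.add_apply, hu k j, hv k j, sum_add_distrib, mul_add]
    ring
  zero_mem' k j := by simp
  smul_mem' c u hu k j := by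
    simp only [Pi.smul_apply, smul_eq_mul, hu k j, mul_add, mul_sum]
    simp only [mul_left_comm c]

/-- The values sent before time `k` that are incorporated only after time `k`. -/
def inTransit (P : Matrix V V ℝ) (τ : V → V → ℕ → ℕ) (u : ℕ → V → ℝ) (k : ℕ) : ℝ :=
  ∑ j, ∑ i ∈ univ.erase j, P j i * ∑ m ∈ (range k).filter (fun m => k ≤ m + τ j i m), u m i

variable {P : Matrix V V ℝ} {τ : V → V → ℕ → ℕ} {τbar : ℕ} {u : ℕ → V → ℝ}

namespace delayedSolutions

theorem diag_mul_le_succ (hP : ∀ j i, 0 ≤ P j i) (hu : u ∈ delayedSolutions P τ) {t : ℕ} {j : V}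
    (harr : ∀ i m, m ≤ t → m + τ j i m = t → 0 ≤ u m i) :
    P j j * u t j ≤ u (t + 1) j := by
  rw [hu t j, le_add_iff_nonneg_right]
  refine sum_nonneg fun i _ => mul_nonneg (hP j i) (sum_nonneg fun m hm => ?_)
  rw [mem_filter, mem_range] at hm
  exact harr i m (by omega) hm.2

theorem mul_le_succ_of_arrival (hP : ∀ j i, 0 ≤ P j i) (hu : u ∈ delayedSolutions P τ)
    {t s : ℕ} {i j : V} (harr : ∀ i' m, m ≤ t → m + τ j i' m = t → 0 ≤ u m i')
    (hself : 0 ≤ u t j) (hij : i ≠ j) (hs : s + τ j i s = t) :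
    P j i * u s i ≤ u (t + 1) j := by
  have hi : i ∈ univ.erase j := mem_erase.mpr ⟨hij, mem_univ i⟩
  have harr_nonneg : ∀ i', 0 ≤ ∑ m ∈ (range (t + 1)).filter (fun m => m + τ j i' m = t), u m i' :=
    fun i' => sum_nonneg fun m hm => by
      rw [mem_filter, mem_range] at hm
      exact harr i' m (by omega) hm.2
  have hsi : u s i ≤ ∑ m ∈ (range (t + 1)).filter (fun m => m + τ j i m = t), u m i :=
    single_le_sum (f := fun m => u m i) (fun m hm => by
      rw [mem_filter, mem_range] at hm
      exact harr i m (by omega) hm.2) (mem_filter.mpr ⟨mem_range.mpr (by omega), hs⟩)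
  rw [hu t j, ← add_sum_erase _ _ hi]
  have hrest := sum_nonneg fun i' (_ : i' ∈ (univ.erase j).erase i) =>
    mul_nonneg (hP j i') (harr_nonneg i')
  linarith [mul_nonneg (hP j j) hself, mul_le_mul_of_nonneg_left hsi (hP j i)]

theorem nonneg_of_nonneg_on_window (hP : ∀ j i, 0 ≤ P j i) (hτ : ∀ j i m, τ j i m ≤ τbar)
    (hu : u ∈ delayedSolutions P τ) {k₀ : ℕ}
    (hbase : ∀ t j, k₀ ≤ t → t ≤ k₀ + τbar → 0 ≤ u t j) :
    ∀ t, k₀ ≤ t → ∀ j, 0 ≤ u t j := by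
  intro t
  induction t using Nat.strong_induction_on with
  | _ t ih =>
    intro ht j
    by_cases hwin : t ≤ k₀ + τbar
    · exact hbase t j ht hwin
    obtain ⟨s, rfl⟩ : ∃ s, t = s + 1 := ⟨t - 1, by omega⟩
    refine (mul_nonneg (hP j j) (ih s (by omega) (by omega) j)).trans
      (diag_mul_le_succ hP hu fun i m hm hmτ => ih m (by omega) ?_ i)
    have := hτ j i m
    omega

theorem pos_of_pos_zero (hP : ∀ j i, 0 ≤ P j i) (hdiag : ∀ j, 0 < P j j)
    (hu : u ∈ delayedSolutions P τ) (h0 : ∀ j, 0 < u 0 j) : ∀ t j, 0 < u t j := by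
  intro t
  induction t using Nat.strong_induction_on with
  | _ t ih =>
    intro j
    match t with
    | 0 => exact h0 j
    | s + 1 =>
      exact (mul_pos (hdiag j) (ih s (by omega) j)).trans_le
        (diag_mul_le_succ hP hu fun i m hm _ => (ih m (by omega) i).le)

section Propagation

variable {p₀ : ℝ} {k₀ : ℕ}

theorem pow_mul_le_add (hP : ∀ j i, 0 ≤ P j i) (hτ : ∀ j i m, τ j i m ≤ τbar)
    (hu : u ∈ delayedSolutions P τ) (hn : ∀ m, k₀ ≤ m → ∀ i, 0 ≤ u m i)
    (hp₀ : 0 ≤ p₀) (hp₀P : ∀ j, p₀ ≤ P j j) {s : ℕ} (hs : k₀ + τbar ≤ s) (j : V) :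
    ∀ d, p₀ ^ d * u s j ≤ u (s + d) j
  | 0 => by simp
  | d + 1 => by
    have hself : P j j * u (s + d) j ≤ u (s + d + 1) j :=
      diag_mul_le_succ hP hu fun i m _ hm => hn m (by have := hτ j i m; omega) i
    calc p₀ ^ (d + 1) * u s j = p₀ * (p₀ ^ d * u s j) := by ring
      _ ≤ P j j * u (s + d) j :=
        mul_le_mul (hp₀P j) (pow_mul_le_add hP hτ hu hn hp₀ hp₀P hs j d)
          (mul_nonneg (pow_nonneg hp₀ d) (hn s (by omega) j)) ((hP j j))
      _ ≤ u (s + (d + 1)) j := hself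

theorem exists_pow_mul_le_of_pos (hP : ∀ j i, 0 ≤ P j i) (hτ : ∀ j i m, τ j i m ≤ τbar)
    (hu : u ∈ delayedSolutions P τ) (hn : ∀ m, k₀ ≤ m → ∀ i, 0 ≤ u m i)
    (hp₀ : 0 ≤ p₀) (hp₀1 : p₀ ≤ 1) (hp₀P : ∀ j i, 0 < P j i → p₀ ≤ P j i)
    {s : ℕ} (hs : k₀ + τbar ≤ s) {i l : V} (hli : 0 < P l i) :
    ∃ a, s ≤ a ∧ a ≤ s + τbar + 1 ∧ p₀ ^ (a - s) * u s i ≤ u a l := by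
  by_cases hil : i = l
  · exact ⟨s, le_rfl, by omega, by simp [hil]⟩
  refine ⟨s + τ l i s + 1, by omega, by have := hτ l i s; omega, ?_⟩
  have hui : 0 ≤ u s i := hn s (by omega) i
  calc p₀ ^ (s + τ l i s + 1 - s) * u s i ≤ p₀ ^ 1 * u s i :=
        mul_le_mul_of_nonneg_right (pow_le_pow_of_le_one hp₀ hp₀1 (by omega)) hui
    _ ≤ P l i * u s i := mul_le_mul_of_nonneg_right (by simpa using hp₀P l i hli) hui
    _ ≤ u (s + τ l i s + 1) l :=
        mul_le_succ_of_arrival hP hu (fun i' m _ hm => hn m (by have := hτ l i' m; omega) i')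
          (hn _ (by omega) l) hil rfl

/-- Each edge of a path is crossed within `τbar + 1` steps, and the positive diagonal lets a
value wait at a node. -/
theorem pow_mul_le_of_pow_pos (hP : ∀ j i, 0 ≤ P j i) (hdiag : ∀ j, 0 < P j j)
    (hτ : ∀ j i m, τ j i m ≤ τbar) (hu : u ∈ delayedSolutions P τ)
    (hn : ∀ m, k₀ ≤ m → ∀ i, 0 ≤ u m i)
    (hp₀ : 0 ≤ p₀) (hp₀1 : p₀ ≤ 1) (hp₀P : ∀ j i, 0 < P j i → p₀ ≤ P j i) (L : ℕ) :
    ∀ {i j : V}, 0 < (P ^ L) j i → ∀ {s t : ℕ}, k₀ + τbar ≤ s → s + L * (τbar + 1) ≤ t →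
      p₀ ^ (t - s) * u s i ≤ u t j := by
  induction L with
  | zero =>
    intro i j hji s t hs hst
    obtain rfl : j = i := by
      by_contra hne
      simp [Matrix.one_apply_ne hne] at hji
    simpa [show s + (t - s) = t by omega] using
      pow_mul_le_add hP hτ hu hn hp₀ (fun j => hp₀P j j (hdiag j)) hs j (t - s)
  | succ L ih =>
    intro i j hji s t hs hst
    rw [pow_succ, Matrix.mul_apply] at hji
    obtain ⟨l, -, hl⟩ := exists_lt_of_sum_lt (f := fun _ => (0 : ℝ)) (by simpa using hji)
    have hli : 0 < P l i := (hP l i).lt_of_ne (by rintro h; simp [← h] at hl)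
    have hjl : 0 < (P ^ L) j l := pos_of_mul_pos_left hl (hP l i)
    obtain ⟨a, hsa, has, hstep⟩ := exists_pow_mul_le_of_pos hP hτ hu hn hp₀ hp₀1 hp₀P hs hli
    calc p₀ ^ (t - s) * u s i = p₀ ^ (t - a) * (p₀ ^ (a - s) * u s i) := by
          rw [← mul_assoc, ← pow_add, show t - a + (a - s) = t - s by
            rw [Nat.add_mul] at hst; omega]
      _ ≤ p₀ ^ (t - a) * u a l := mul_le_mul_of_nonneg_left hstep (pow_nonneg hp₀ _)
      _ ≤ u t j := ih hjl (by omega) (by rw [Nat.add_mul] at hst; omega)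

end Propagation

theorem sum_add_inTransit_succ (hcol : ∀ i, ∑ j, P j i = 1) (hu : u ∈ delayedSolutions P τ)
    (k : ℕ) :
    ∑ j, u (k + 1) j + inTransit P τ u (k + 1) = ∑ j, u k j + inTransit P τ u k := by
  have hsent : ∑ j, (P j j * u k j + ∑ i ∈ univ.erase j, P j i * u k i) = ∑ i, u k i := by
    rw [sum_congr rfl fun j _ => add_sum_erase univ (fun i => P j i * u k i) (mem_univ j),
      sum_comm]
    simp_rw [← sum_mul, hcol, one_mul]
  simp only [inTransit, hu k _, ← hsent, ← sum_add_distrib]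
  refine sum_congr rfl fun j _ => ?_
  rw [add_assoc, add_assoc, ← sum_add_distrib, ← sum_add_distrib]
  congr 1
  refine sum_congr rfl fun i _ => ?_
  rw [← mul_add, ← mul_add, sum_filter_arrival_add_sum_filter_pending, add_comm]

theorem sum_add_inTransit (hcol : ∀ i, ∑ j, P j i = 1) (hu : u ∈ delayedSolutions P τ) :
    ∀ k, ∑ j, u k j + inTransit P τ u k = ∑ j, u 0 j
  | 0 => by simp [inTransit]
  | k + 1 => by rw [sum_add_inTransit_succ hcol hu, sum_add_inTransit hcol hu k]

theorem le_sum_zero (hP : ∀ j i, 0 ≤ P j i) (hcol : ∀ i, ∑ j, P j i = 1)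
    (hu : u ∈ delayedSolutions P τ) (hn : ∀ t j, 0 ≤ u t j) (t : ℕ) (j : V) :
    u t j ≤ ∑ j, u 0 j := by
  have hQ : 0 ≤ inTransit P τ u t := sum_nonneg fun j _ => sum_nonneg fun i _ =>
    mul_nonneg (hP j i) (sum_nonneg fun m _ => hn m i)
  rw [← sum_add_inTransit hcol hu t]
  linarith [single_le_sum (fun j _ => hn t j) (mem_univ j)]

theorem inTransit_le (hP : ∀ j i, 0 ≤ P j i) (hcol : ∀ i, ∑ j, P j i = 1)
    (hτ : ∀ j i m, τ j i m ≤ τbar) (hn : ∀ t j, 0 ≤ u t j) (k : ℕ) :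
    inTransit P τ u k ≤ ∑ m ∈ Ico (k - τbar) k, ∑ i, u m i := by
  set G : V → ℝ := fun i => ∑ m ∈ Ico (k - τbar) k, u m i
  have hG : ∀ i, 0 ≤ G i := fun i => sum_nonneg fun m _ => hn m i
  have hpending : ∀ j i, ∑ m ∈ (range k).filter (fun m => k ≤ m + τ j i m), u m i ≤ G i :=
    fun j i => sum_le_sum_of_subset_of_nonneg (fun m hm => by
      rw [mem_filter, mem_range] at hm
      have := hτ j i m
      rw [mem_Ico]; omega) fun m _ _ => hn m i
  calc inTransit P τ u k ≤ ∑ j, ∑ i ∈ univ.erase j, P j i * G i :=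
        sum_le_sum fun j _ => sum_le_sum fun i _ =>
          mul_le_mul_of_nonneg_left (hpending j i) (hP j i)
    _ ≤ ∑ j, ∑ i, P j i * G i := sum_le_sum fun j _ =>
        sum_le_sum_of_subset_of_nonneg (erase_subset j univ) fun i _ _ =>
          mul_nonneg (hP j i) (hG i)
    _ = ∑ m ∈ Ico (k - τbar) k, ∑ i, u m i := by
        rw [sum_comm]
        simp_rw [← sum_mul, hcol, one_mul]
        exact sum_comm

theorem sum_zero_le_sum_Icc (hP : ∀ j i, 0 ≤ P j i) (hcol : ∀ i, ∑ j, P j i = 1)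
    (hτ : ∀ j i m, τ j i m ≤ τbar) (hu : u ∈ delayedSolutions P τ) (hn : ∀ t j, 0 ≤ u t j)
    (k : ℕ) : ∑ j, u 0 j ≤ ∑ m ∈ Icc (k - τbar) k, ∑ i, u m i := by
  rw [← sum_add_inTransit hcol hu k, ← Ico_add_one_right_eq_Icc,
    sum_Ico_succ_top (Nat.sub_le k τbar), add_comm]
  exact add_le_add_left (inTransit_le hP hcol hτ hn k) _

theorem exists_sum_zero_div_le [Nonempty V] (hP : ∀ j i, 0 ≤ P j i) (hcol : ∀ i, ∑ j, P j i = 1)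
    (hτ : ∀ j i m, τ j i m ≤ τbar) (hu : u ∈ delayedSolutions P τ) (hn : ∀ t j, 0 ≤ u t j)
    {k : ℕ} (hk : τbar ≤ k) :
    ∃ m, k - τbar ≤ m ∧ m ≤ k ∧ ∃ i, (∑ j, u 0 j) / ((τbar + 1) * Fintype.card V) ≤ u m i := by
  have hcard : (#(Icc (k - τbar) k ×ˢ (univ : Finset V)) : ℝ) = (τbar + 1) * Fintype.card V := by
    rw [card_product, Nat.card_Icc, card_univ, show k + 1 - (k - τbar) = τbar + 1 by omega]
    push_cast; ring
  have hpos : (0 : ℝ) < (τbar + 1) * Fintype.card V := by positivity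
  obtain ⟨⟨m, i⟩, hmi, hle⟩ := exists_le_of_sum_le
    (f := fun _ => (∑ j, u 0 j) / ((τbar + 1) * Fintype.card V)) (g := fun p => u p.1 p.2)
    ((nonempty_Icc.mpr (Nat.sub_le k τbar)).product univ_nonempty) (by
      rw [sum_const, nsmul_eq_mul, hcard, mul_div_cancel₀ _ hpos.ne', sum_product]
      exact sum_zero_le_sum_Icc hP hcol hτ hu hn k)
  rw [mem_product, mem_Icc] at hmi
  exact ⟨m, hmi.1.1, hmi.1.2, i, hle⟩

end delayedSolutions

section Ratio

open delayedSolutions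

variable {y z : ℕ → V → ℝ}

theorem le_mul_of_le_mul_on_window (hP : ∀ j i, 0 ≤ P j i) (hτ : ∀ j i m, τ j i m ≤ τbar)
    (hy : y ∈ delayedSolutions P τ) (hz : z ∈ delayedSolutions P τ) {b : ℝ} {k₀ : ℕ}
    (hbase : ∀ t j, k₀ ≤ t → t ≤ k₀ + τbar → y t j ≤ b * z t j) :
    ∀ t, k₀ ≤ t → ∀ j, y t j ≤ b * z t j := by
  have := nonneg_of_nonneg_on_window hP hτ (sub_mem (Submodule.smul_mem _ b hz) hy)
    fun t j h₁ h₂ => by simpa using hbase t j h₁ h₂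
  intro t ht j
  simpa using this t ht j

variable [Nonempty V]

theorem windowSup_div_le (hP : ∀ j i, 0 ≤ P j i) (hτ : ∀ j i m, τ j i m ≤ τbar)
    (hy : y ∈ delayedSolutions P τ) (hz : z ∈ delayedSolutions P τ) (hzpos : ∀ t j, 0 < z t j)
    {w k k' : ℕ} (hw : τbar ≤ w) (hk : w ≤ k) (hkk' : k ≤ k') :
    windowSup (y / z) w k' ≤ windowSup (y / z) w k := by
  have hbound := le_mul_of_le_mul_on_window hP hτ hy hz (b := windowSup (y / z) w k)
    (k₀ := k - w) fun t j h₁ h₂ =>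
      (div_le_iff₀ (hzpos t j)).1 (le_windowSup (f := y / z) j h₁ (by omega))
  exact windowSup_le fun t j h₁ _ => (div_le_iff₀ (hzpos t j)).2 (hbound t (by omega) j)

/-- The window has width `2 τbar` so that the source `(m, i)` lies `τbar` steps after the start
of the region where `M • z - y ≥ 0` is known, as `pow_mul_le_of_pow_pos` requires. -/
theorem windowSup_div_add_le (hP : ∀ j i, 0 ≤ P j i) (hdiag : ∀ j, 0 < P j j)
    (hτ : ∀ j i m, τ j i m ≤ τbar) (hy : y ∈ delayedSolutions P τ)
    (hz : z ∈ delayedSolutions P τ) (hzpos : ∀ t j, 0 < z t j) {p₀ : ℝ} (hp₀ : 0 ≤ p₀)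
    (hp₀1 : p₀ ≤ 1) (hp₀P : ∀ j i, 0 < P j i → p₀ ≤ P j i) {L : ℕ}
    (hL : ∀ j i, 0 < (P ^ L) j i) {k m : ℕ} {i : V} {θ : ℝ} (hθ : 0 ≤ θ) (hk : 2 * τbar ≤ k)
    (hm₁ : k - τbar ≤ m) (hm₂ : m ≤ k) (hzm : ∀ t j, θ * z t j ≤ z m i) :
    windowSup (y / z) (2 * τbar) (k + (L * (τbar + 1) + 2 * τbar)) ≤
      windowSup (y / z) (2 * τbar) k - p₀ ^ (L * (τbar + 1) + 3 * τbar) * θ *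
        (windowSup (y / z) (2 * τbar) k - y m i / z m i) := by
  set M := windowSup (y / z) (2 * τbar) k
  have hbound := le_mul_of_le_mul_on_window hP hτ hy hz (b := M) (k₀ := k - 2 * τbar)
    fun t j h₁ h₂ => (div_le_iff₀ (hzpos t j)).1 (le_windowSup (f := y / z) j h₁ (by omega))
  have hu : M • z - y ∈ delayedSolutions P τ := sub_mem (Submodule.smul_mem _ M hz) hy
  have hn : ∀ t, k - 2 * τbar ≤ t → ∀ j, 0 ≤ (M • z - y) t j := fun t ht j => by
    simpa using hbound t ht j
  have hgap : 0 ≤ M - y m i / z m i :=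
    sub_nonneg.2 (le_windowSup (f := y / z) i (by omega) hm₂)
  have hum : (M • z - y) m i = (M - y m i / z m i) * z m i := by
    simp only [Pi.sub_apply, Pi.smul_apply, smul_eq_mul]
    field_simp [(hzpos m i).ne']
  refine windowSup_le fun t j ht₁ ht₂ => ?_
  have hreach : p₀ ^ (t - m) * (M • z - y) m i ≤ (M • z - y) t j :=
    pow_mul_le_of_pow_pos hP hdiag hτ hu hn hp₀ hp₀1 hp₀P L (hL j i) (by omega) (by omega)
  have hdecay : p₀ ^ (L * (τbar + 1) + 3 * τbar) ≤ p₀ ^ (t - m) :=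
    pow_le_pow_of_le_one hp₀ hp₀1 (by omega)
  show y t j / z t j ≤ _
  rw [div_le_iff₀ (hzpos t j)]
  have : p₀ ^ (L * (τbar + 1) + 3 * τbar) * θ * (M - y m i / z m i) * z t j ≤ M * z t j - y t j :=
    calc _ = p₀ ^ (L * (τbar + 1) + 3 * τbar) * (M - y m i / z m i) * (θ * z t j) := by ring
      _ ≤ p₀ ^ (t - m) * (M - y m i / z m i) * z m i :=
        mul_le_mul (mul_le_mul_of_nonneg_right hdecay hgap) (hzm t j)
          (mul_nonneg hθ (hzpos t j).le) (mul_nonneg (pow_nonneg hp₀ _) hgap)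
      _ = p₀ ^ (t - m) * (M • z - y) m i := by rw [hum]; ring
      _ ≤ M * z t j - y t j := hreach
  linarith

theorem windowSpread_div_le (hP : ∀ j i, 0 ≤ P j i) (hτ : ∀ j i m, τ j i m ≤ τbar)
    (hy : y ∈ delayedSolutions P τ) (hz : z ∈ delayedSolutions P τ) (hzpos : ∀ t j, 0 < z t j)
    {w k k' : ℕ} (hw : τbar ≤ w) (hk : w ≤ k) (hkk' : k ≤ k') :
    windowSpread (y / z) w k' ≤ windowSpread (y / z) w k := by
  simp only [windowSpread, ← neg_div]
  exact add_le_add (windowSup_div_le hP hτ hy hz hzpos hw hk hkk')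
    (windowSup_div_le hP hτ (neg_mem hy) hz hzpos hw hk hkk')

theorem windowSpread_div_add_le (hP : ∀ j i, 0 ≤ P j i) (hdiag : ∀ j, 0 < P j j)
    (hτ : ∀ j i m, τ j i m ≤ τbar) (hy : y ∈ delayedSolutions P τ)
    (hz : z ∈ delayedSolutions P τ) (hzpos : ∀ t j, 0 < z t j) {p₀ : ℝ} (hp₀ : 0 ≤ p₀)
    (hp₀1 : p₀ ≤ 1) (hp₀P : ∀ j i, 0 < P j i → p₀ ≤ P j i) {L : ℕ}
    (hL : ∀ j i, 0 < (P ^ L) j i) {k m : ℕ} {i : V} {θ : ℝ} (hθ : 0 ≤ θ) (hk : 2 * τbar ≤ k)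
    (hm₁ : k - τbar ≤ m) (hm₂ : m ≤ k) (hzm : ∀ t j, θ * z t j ≤ z m i) :
    windowSpread (y / z) (2 * τbar) (k + (L * (τbar + 1) + 2 * τbar)) ≤
      (1 - p₀ ^ (L * (τbar + 1) + 3 * τbar) * θ) * windowSpread (y / z) (2 * τbar) k := by
  have hupper := windowSup_div_add_le hP hdiag hτ hy hz hzpos hp₀ hp₀1 hp₀P hL hθ hk hm₁ hm₂ hzm
  have hlower := windowSup_div_add_le hP hdiag hτ (neg_mem hy) hz hzpos hp₀ hp₀1 hp₀P hL hθ hk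
    hm₁ hm₂ hzm
  simp only [neg_div, Pi.neg_apply] at hlower
  rw [windowSpread, windowSpread]
  linarith

theorem eventually_windowSpread_div_lt (hP : ∀ j i, 0 ≤ P j i) (hcol : ∀ i, ∑ j, P j i = 1)
    (hdiag : ∀ j, 0 < P j j) (hτ : ∀ j i m, τ j i m ≤ τbar) {L : ℕ}
    (hL : ∀ j i, 0 < (P ^ L) j i) (hy : y ∈ delayedSolutions P τ)
    (hz : z ∈ delayedSolutions P τ) (hz0 : ∀ j, 0 < z 0 j) :
    ∀ ε > 0, ∀ᶠ k in atTop, windowSpread (y / z) (2 * τbar) k < ε := by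
  obtain ⟨p₀, hp₀, hp₀1, hp₀P⟩ := exists_pos_le_of_pos (Function.uncurry P)
  have hzpos := pos_of_pos_zero hP hdiag hz hz0
  set θ : ℝ := ((τbar + 1) * Fintype.card V)⁻¹
  have hθ : 0 < θ := by positivity
  have hθ1 : θ ≤ 1 := inv_le_one_of_one_le₀ (one_le_mul_of_one_le_of_one_le
    (by simp) (by exact_mod_cast Fintype.card_pos))
  set c := p₀ ^ (L * (τbar + 1) + 3 * τbar) * θ
  have hc : 0 < c := by positivity
  have hc1 : c ≤ 1 := mul_le_one₀ (pow_le_one₀ hp₀.le hp₀1) hθ.le hθ1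
  refine eventually_lt_of_le_mul (q := 1 - c) (K := L * (τbar + 1) + 2 * τbar) (k₁ := 2 * τbar)
    (by linarith) (by linarith)
    (fun k hk k' _ hkk' => windowSpread_div_le hP hτ hy hz hzpos (by omega) hk hkk') fun k hk => ?_
  obtain ⟨m, hm₁, hm₂, i, hmi⟩ := exists_sum_zero_div_le hP hcol hτ hz (fun t j => (hzpos t j).le)
    (k := k) (by omega)
  refine windowSpread_div_add_le hP hdiag hτ hy hz hzpos hp₀.le hp₀1 (fun j i => hp₀P (j, i)) hL
    hθ.le hk hm₁ hm₂ (i := i) fun t j => ?_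
  calc θ * z t j ≤ θ * ∑ j, z 0 j :=
        mul_le_mul_of_nonneg_left (le_sum_zero hP hcol hz (fun t j => (hzpos t j).le) t j) hθ.le
    _ ≤ z m i := by rwa [inv_mul_eq_div]

end Ratio

end Delayed

theorem finite_time_async_termination_general
    {V : Type*} [Fintype V] [DecidableEq V] [Nonempty V]
    (P : Matrix V V ℝ)
    (hnonneg : ∀ j i, 0 ≤ P j i)
    (hcol : ∀ i, ∑ j, P j i = 1)
    (hprim : ∃ m : ℕ, 1 ≤ m ∧ ∀ j i, 0 < (P ^ m) j i)
    (hdiag : ∀ j, 0 < P j j)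
    (τbar : ℕ) (τ : V → V → ℕ → ℕ)
    (hτ : ∀ (j i : V) (m : ℕ), τ j i m ≤ τbar)
    (z₀ : V → ℝ) (hz₀ : ∀ i, 0 < z₀ i)
    (y z : ℕ → V → ℝ)
    (hz0 : z 0 = z₀)
    (hy : ∀ k (j : V), y (k + 1) j =
      P j j * y k j + ∑ i ∈ Finset.univ.erase j,
        P j i * ∑ m ∈ (Finset.range (k + 1)).filter (fun m => m + τ j i m = k), y m i)
    (hz : ∀ k (j : V), z (k + 1) j =
      P j j * z k j + ∑ i ∈ Finset.univ.erase j,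
        P j i * ∑ m ∈ (Finset.range (k + 1)).filter (fun m => m + τ j i m = k), z m i)
    (μ : ℕ → V → ℝ) (hμ : ∀ k (j : V), μ k j = y k j / z k j) :
    ∀ ε > (0 : ℝ), ∀ W : ℕ, 0 < W →
      ∃ r₀ : ℕ, ∀ r, r₀ ≤ r →
        Finset.univ.sup' Finset.univ_nonempty (μ (r * W)) -
          Finset.univ.inf' Finset.univ_nonempty (μ (r * W)) < ε := by
  intro ε hε W hW
  obtain ⟨L, -, hL⟩ := hprim
  obtain rfl : μ = y / z := funext fun k => funext (hμ k)
  obtain ⟨r₀, hr₀⟩ := eventually_atTop.1 <| eventually_windowSpread_div_lt hnonneg hcol hdiag hτ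
    hL hy hz (hz0 ▸ hz₀) ε hε
  exact ⟨r₀, fun r hr => sup'_sub_inf'_le_windowSpread.trans_lt
    (hr₀ _ (hr.trans (Nat.le_mul_of_pos_right r hW)))⟩

/-- Theorem 1: for the robustified (asynchronous) ratio-consensus iterations
with bounded delays, for every tolerance `ε > 0` and every positive window
length `W` (in particular `W = (1+τ̄)·D`), there is a round `r₀` after which
the spread of the ratios sampled every `W` steps is below `ε`; hence the
distributed termination test of Algorithm 2 is passed after finitely many
rounds, i.e. Algorithm 2 converges in finite time. -/
theorem finite_time_async_termination
    {V : Type*} [Fintype V] [DecidableEq V] [Nonempty V]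
    (P : Matrix V V ℝ)
    (hnonneg : ∀ j i, 0 ≤ P j i)
    (hcol : ∀ i, ∑ j, P j i = 1)
    (hprim : ∃ m : ℕ, 1 ≤ m ∧ ∀ j i, 0 < (P ^ m) j i)
    (hdiag : ∀ j, 0 < P j j)
    (τbar : ℕ) (τ : V → V → ℕ → ℕ)
    (hτ : ∀ (j i : V) (m : ℕ), τ j i m ≤ τbar)
    (y₀ z₀ : V → ℝ) (hz₀ : ∀ i, 0 < z₀ i)
    (y z : ℕ → V → ℝ)
    (hy0 : y 0 = y₀) (hz0 : z 0 = z₀)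
    (hy : ∀ k (j : V), y (k + 1) j =
      P j j * y k j + ∑ i ∈ Finset.univ.erase j,
        P j i * ∑ m ∈ (Finset.range (k + 1)).filter (fun m => m + τ j i m = k), y m i)
    (hz : ∀ k (j : V), z (k + 1) j =
      P j j * z k j + ∑ i ∈ Finset.univ.erase j,
        P j i * ∑ m ∈ (Finset.range (k + 1)).filter (fun m => m + τ j i m = k), z m i)
    (μ : ℕ → V → ℝ) (hμ : ∀ k (j : V), μ k j = y k j / z k j) :
    ∀ ε > (0 : ℝ), ∀ W : ℕ, 0 < W →
      ∃ r₀ : ℕ, ∀ r, r₀ ≤ r →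
        Finset.univ.sup' Finset.univ_nonempty (μ (r * W)) -
          Finset.univ.inf' Finset.univ_nonempty (μ (r * W)) < ε :=
  finite_time_async_termination_general P hnonneg hcol hprim hdiag τbar τ hτ z₀ hz₀ y z hz0 hy hz μ
    hμ
end
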